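/- arXiv:2504.11747 — 12 statements merged into one kernel-verified Lean document; each statement's English description precedes it below -/
import Mathlib

section
/- For d ≥ 3 and a pair (i,j) ∈ ℤ_d × ℤ_d with i dividing d and 0 ≤ j ≤ d/i - 1, the set C_{i,j} = {(x,y) ∈ ℤ_d × ℤ_d : iy - jx ≡ 0 (mod d) and x ∈ iℤ_d} has exactly d elements. -/
/-- Two pairs `(m,n)`, `(s,t)` in `ℤ_d × ℤ_d` commute (as generalized Pauli
operators `X^m Z^n`, `X^s Z^t`) iff `ns - mt ≡ 0 (mod d)`. -/
def Commutes (d : ℕ) (p q : ZMod d × ZMod d) : Prop :=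
  p.2 * q.1 - p.1 * q.2 = 0

/-- The set `C_{i,j} = {(x,y) : iy - jx ≡ 0 (mod d), x ∈ iℤ_d}`.
Note `Cset d 0 0 = {(0,y) : y ∈ ℤ_d}` is the set `C_{0,0}`. -/
def Cset (d i j : ℕ) : Set (ZMod d × ZMod d) :=
  {p | (i : ZMod d) * p.2 - (j : ZMod d) * p.1 = 0 ∧ ∃ k : ZMod d, p.1 = (i : ZMod d) * k}

/-- A maximal commutative set (MCS) of pairs in `ℤ_d × ℤ_d`. -/
def IsMCS (d : ℕ) (M : Set (ZMod d × ZMod d)) : Prop :=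
  (∀ p ∈ M, ∀ q ∈ M, Commutes d p q) ∧
  ∀ N : Set (ZMod d × ZMod d), M ⊆ N → (∀ p ∈ N, ∀ q ∈ N, Commutes d p q) → N = M

/-- For `i ∣ d` and `0 ≤ j ≤ d/i - 1`, the set `C_{i,j}` has exactly `d` elements. -/
theorem Cset_ncard (d : ℕ) (hd : 3 ≤ d) (i j : ℕ) (hi : i ∣ d) (hj : j ≤ d / i - 1) :
    (Cset d i j).ncard = d := by
  have hd0 : 0 < d := by omega
  haveI : NeZero d := ⟨by omega⟩
  have ipos : 0 < i := by
    rcases Nat.eq_zero_or_pos i with h | h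
    · subst h; rw [zero_dvd_iff] at hi; omega
    · exact h
  set n := d / i with hn
  have hdn : i * n = d := Nat.mul_div_cancel' hi
  have npos : 0 < n := by
    rcases Nat.eq_zero_or_pos n with h | h
    · rw [h, Nat.mul_zero] at hdn; omega
    · exact h
  set e : Fin n × Fin i → ZMod d × ZMod d :=
    fun p => (((i * p.1.val : ℕ) : ZMod d), ((j * p.1.val + n * p.2.val : ℕ) : ZMod d)) with he
  have hinj : Function.Injective e := by
    rintro ⟨a, b⟩ ⟨a', b'⟩ hab
    simp only [he, Prod.mk.injEq] at hab
    obtain ⟨h1, h2⟩ := hab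
    have ha1 : i * a.val < d := hdn ▸ (Nat.mul_lt_mul_left ipos).mpr a.isLt
    have ha1' : i * a'.val < d := hdn ▸ (Nat.mul_lt_mul_left ipos).mpr a'.isLt
    have haa : i * a.val = i * a'.val := by
      have := congrArg ZMod.val h1
      rwa [ZMod.val_cast_of_lt ha1, ZMod.val_cast_of_lt ha1'] at this
    have haeq : a = a' := by
      ext; exact Nat.eq_of_mul_eq_mul_left ipos haa
    subst haeq
    have h2' : ((n * b.val : ℕ) : ZMod d) = ((n * b'.val : ℕ) : ZMod d) := by
      push_cast at h2 ⊢
      exact add_left_cancel h2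
    have hnid : n * i = d := by rw [Nat.mul_comm]; exact hdn
    have hb1 : n * b.val < d := hnid ▸ (Nat.mul_lt_mul_left npos).mpr b.isLt
    have hb1' : n * b'.val < d := hnid ▸ (Nat.mul_lt_mul_left npos).mpr b'.isLt
    have := congrArg ZMod.val h2'
    rw [ZMod.val_cast_of_lt hb1, ZMod.val_cast_of_lt hb1'] at this
    have : b = b' := by ext; exact Nat.eq_of_mul_eq_mul_left npos this
    simp [this]
  have hdcast : ((i : ZMod d) * (n : ZMod d)) = 0 := by
    rw [← Nat.cast_mul, hdn, ZMod.natCast_self]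
  have hrange : Set.range e = Cset d i j := by
    ext ⟨x, y⟩
    constructor
    · rintro ⟨⟨a, b⟩, hab⟩
      simp only [he, Prod.mk.injEq] at hab
      obtain ⟨h1, h2⟩ := hab
      constructor
      · show (i : ZMod d) * y - (j : ZMod d) * x = 0
        rw [← h1, ← h2]
        push_cast
        linear_combination ((b.val : ℕ) : ZMod d) * hdcast
      · exact ⟨(a.val : ZMod d), by rw [← h1]; push_cast; ring⟩
    · rintro ⟨hc, k, hk⟩
      change (i : ZMod d) * y - (j : ZMod d) * x = 0 at hc
      change x = (i : ZMod d) * k at hk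
      set K := k.val with hK
      have hkK : ((K : ℕ) : ZMod d) = k := by
        rw [hK, ZMod.natCast_val, ZMod.cast_id]
      have hx : x = ((i * K : ℕ) : ZMod d) := by rw [hk, ← hkK]; push_cast; ring
      set z : ZMod d := y - (j : ZMod d) * k with hz
      have hiz : (i : ZMod d) * z = 0 := by
        have : (i : ZMod d) * z = (i : ZMod d) * y - (j : ZMod d) * ((i : ZMod d) * k) := by
          rw [hz]; ring
        rw [this, ← hk]; exact hc
      have hzz : ((z.val : ℕ) : ZMod d) = z := by rw [ZMod.natCast_val, ZMod.cast_id]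
      have hdvd : d ∣ i * z.val := by
        rw [← ZMod.natCast_eq_zero_iff]
        push_cast
        rw [hzz]; exact hiz
      have hndvd : n ∣ z.val := by
        have h' : i * n ∣ i * z.val := by rw [hdn]; exact hdvd
        exact (mul_dvd_mul_iff_left (by omega : (i : ℕ) ≠ 0)).mp h'
      obtain ⟨m, hm⟩ := hndvd
      have hmlt : m < i := by
        have hvd : n * m < i * n := by rw [← hm, hdn]; exact ZMod.val_lt z
        by_contra h
        push_neg at h
        have h2 := Nat.mul_le_mul_left n h
        have h3 : i * n = n * i := Nat.mul_comm i n
        omega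
      have hy : y = ((j * K + n * m : ℕ) : ZMod d) := by
        have : y = (j : ZMod d) * k + z := by rw [hz]; ring
        rw [this, ← hkK, ← hzz, hm]
        push_cast; ring
      set A := K % n with hA
      set Q := K / n with hQ
      have hKAQ : A + n * Q = K := Nat.mod_add_div K n
      set t := j * Q + m with ht
      set T := t % i with hT
      set S := t / i with hS
      have hTS : T + i * S = t := Nat.mod_add_div t i
      have hAlt : A < n := Nat.mod_lt _ npos
      have hTlt : T < i := Nat.mod_lt _ ipos
      refine ⟨(⟨A, hAlt⟩, ⟨T, hTlt⟩), ?_⟩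
      simp only [he]
      refine Prod.ext ?_ ?_
      · show ((i * A : ℕ) : ZMod d) = x
        have key : i * K = i * A + d * Q := by
          rw [← hKAQ, ← hdn]; ring
        rw [hx, key]
        push_cast
        simp [ZMod.natCast_self]
      · show ((j * A + n * T : ℕ) : ZMod d) = y
        have key : j * K + n * m = (j * A + n * T) + d * S := by
          rw [← hKAQ, ← hdn]
          calc j * (A + n * Q) + n * m
              = j * A + n * (j * Q + m) := by ring
            _ = j * A + n * t := by rw [ht]
            _ = j * A + n * (T + i * S) := by rw [hTS]
            _ = (j * A + n * T) + i * n * S := by ring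
        rw [hy, key]
        push_cast
        simp [ZMod.natCast_self]
  rw [← hrange, ← Set.image_univ, Set.ncard_image_of_injective _ hinj, Set.ncard_univ]
  simp only [Nat.card_eq_fintype_card, Fintype.card_prod, Fintype.card_fin]
  rw [Nat.mul_comm]; exact hdn
end

section
/- For d ≥ 3, the set C_{i,j} = {(x,y) ∈ ℤ_d × ℤ_d : iy - jx ≡ 0 (mod d) and x ∈ iℤ_d} (i ≠ 0, i | d) is a maximal commutative set: any two elements (x₁,y₁), (x₂,y₂) of C_{i,j} satisfy x₁y₂ - x₂y₁ ≡ 0 (mod d), and C_{i,j} cannot be enlarged while preserving this pairwise condition. -/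
/-- For `i ≠ 0`, `i ∣ d`, the set `C_{i,j}` is a maximal commutative set:
its elements pairwise commute and it cannot be enlarged keeping this property. -/
theorem Cset_isMCS (d : ℕ) (hd : 3 ≤ d) (i j : ℕ) (hi : i ∣ d) (hi0 : i ≠ 0)
    (hj : j ≤ d / i - 1) :
    (∀ p ∈ Cset d i j, ∀ q ∈ Cset d i j, Commutes d p q) ∧
    (∀ N : Set (ZMod d × ZMod d), Cset d i j ⊆ N →
      (∀ p ∈ N, ∀ q ∈ N, Commutes d p q) → N = Cset d i j) := by
  have hd0 : NeZero d := ⟨by omega⟩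
  set m := d / i with hm
  have hmi : i * m = d := Nat.mul_div_cancel' hi
  have hm0 : 0 < m := Nat.div_pos (Nat.le_of_dvd (by omega) hi) (Nat.pos_of_ne_zero hi0)
  constructor
  · rintro ⟨x1, y1⟩ ⟨h1, k1, e1⟩ ⟨x2, y2⟩ ⟨h2, k2, e2⟩
    simp only [Cset, Set.mem_setOf_eq] at h1 h2 e1 e2
    show y1 * x2 - x1 * y2 = 0
    subst e1; subst e2
    linear_combination k2 * h1 - k1 * h2
  · intro N hCN hcomm
    refine Set.Subset.antisymm ?_ hCN
    rintro ⟨x, y⟩ hp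
    have hij : ((i : ZMod d), (j : ZMod d)) ∈ Cset d i j := ⟨by ring, 1, by ring⟩
    have h0m : ((0 : ZMod d), (m : ZMod d)) ∈ Cset d i j := by
      refine ⟨?_, 0, by ring⟩
      show (i : ZMod d) * m - (j : ZMod d) * 0 = 0
      rw [← Nat.cast_mul, hmi]
      simp
    have c1 := hcomm _ hp _ (hCN hij)
    have c2 := hcomm _ hp _ (hCN h0m)
    simp only [Commutes] at c1 c2
    refine ⟨by linear_combination c1, ?_⟩
    have hxm : (m : ZMod d) * x = 0 := by linear_combination -c2
    have hdvd : d ∣ m * x.val := by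
      have h : ((m * x.val : ℕ) : ZMod d) = 0 := by
        push_cast [ZMod.natCast_val, ZMod.cast_id]
        exact hxm
      exact (ZMod.natCast_eq_zero_iff _ _).mp h
    obtain ⟨c, hc⟩ := hdvd
    have ht : x.val = i * c := by
      have : m * x.val = m * (i * c) := by rw [hc, ← hmi]; ring
      exact Nat.eq_of_mul_eq_mul_left hm0 this
    set t := c
    refine ⟨(t : ZMod d), ?_⟩
    show x = (i : ZMod d) * t
    rw [← Nat.cast_mul, ← ht, ZMod.natCast_val, ZMod.cast_id]
end

section
/- For d ≥ 3, every maximal commutative set of pairs in ℤ_d × ℤ_d (with respect to the commutation relation ns - mt ≡ 0 mod d) is either C_{0,0} = {(0,y) : y ∈ ℤ_d} or equals C_{i,j} = {(x,y) : iy - jx ≡ 0 (mod d), x ∈ iℤ_d} for some divisor i of d with i ≠ 0 and 0 ≤ j ≤ d/i - 1. -/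
/-- Every maximal commutative set in `ℤ_d × ℤ_d` is either
`C_{0,0} = {(0,y)}` or some `C_{i,j}` with `i ∣ d`, `i ≠ 0`, `0 ≤ j ≤ d/i - 1`. -/
theorem mcs_structure (d : ℕ) (hd : 3 ≤ d) (M : Set (ZMod d × ZMod d)) (hM : IsMCS d M) :
    M = Cset d 0 0 ∨
    ∃ i j : ℕ, i ∣ d ∧ i ≠ 0 ∧ j ≤ d / i - 1 ∧ M = Cset d i j := by
  classical
  haveI : NeZero d := ⟨by omega⟩
  obtain ⟨hcomm, hmax⟩ := hM
  -- M equals its own centralizer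
  have hcent : ∀ q, (∀ p ∈ M, Commutes d p q) → q ∈ M := by
    intro q hq
    have hN : ∀ p ∈ insert q M, ∀ r ∈ insert q M, Commutes d p r := by
      intro p hp r hr
      rcases hp with hp | hp <;> rcases hr with hr | hr
      · subst hp; subst hr; show _ * _ - _ * _ = 0; ring
      · subst hp
        have h : r.2 * p.1 - r.1 * p.2 = 0 := hq r hr
        show p.2 * r.1 - p.1 * r.2 = 0
        linear_combination -h
      · subst hr; exact hq p hp
      · exact hcomm p hp r hr
    have heq := hmax (insert q M) (Set.subset_insert q M) hN
    rw [← heq]; exact Set.mem_insert q M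
  have h00 : ((0 : ZMod d), (0 : ZMod d)) ∈ M := by
    apply hcent; intro r hr; show r.2 * 0 - r.1 * 0 = 0; ring
  -- M is closed under linear combinations
  have hsub : ∀ p ∈ M, ∀ q ∈ M, ∀ c : ZMod d,
      ((p.1 - c * q.1, p.2 - c * q.2) : ZMod d × ZMod d) ∈ M := by
    intro p hp q hq c
    apply hcent; intro r hr
    have h1 : r.2 * p.1 - r.1 * p.2 = 0 := hcomm r hr p hp
    have h2 : r.2 * q.1 - r.1 * q.2 = 0 := hcomm r hr q hq
    show r.2 * (p.1 - c * q.1) - r.1 * (p.2 - c * q.2) = 0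
    linear_combination h1 - c * h2
  have hP : ∃ n : ℕ, 0 < n ∧ ∃ y : ZMod d, (((n : ZMod d), y) : ZMod d × ZMod d) ∈ M :=
    ⟨d, by omega, 0, by rw [ZMod.natCast_self]; exact h00⟩
  set i := Nat.find hP with hi_def
  obtain ⟨hipos, y0, hy0⟩ := Nat.find_spec hP
  -- i divides the (value of the) first coordinate of every element of M
  have hdvd : ∀ n : ℕ, ∀ y : ZMod d, (((n : ZMod d), y) : ZMod d × ZMod d) ∈ M → i ∣ n := by
    intro n y hn
    by_contra hnd
    have hr0 : n % i ≠ 0 := fun h => hnd (Nat.dvd_of_mod_eq_zero h)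
    have hmem := hsub _ hn _ hy0 ((n / i : ℕ) : ZMod d)
    have hfc : (n : ZMod d) - ((n / i : ℕ) : ZMod d) * (i : ZMod d) = ((n % i : ℕ) : ZMod d) := by
      have h1 : (n : ZMod d) = ((i * (n / i) + n % i : ℕ) : ZMod d) := by
        rw [Nat.div_add_mod]
      rw [h1]; push_cast; ring
    have hP' : 0 < n % i ∧ ∃ y : ZMod d, ((((n % i : ℕ) : ZMod d), y) : ZMod d × ZMod d) ∈ M := by
      refine ⟨Nat.pos_of_ne_zero hr0, y - ((n / i : ℕ) : ZMod d) * y0, ?_⟩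
      rw [← hfc]
      exact hmem
    exact Nat.find_min hP (Nat.mod_lt n hipos) hP'
  have hid : i ∣ d := hdvd d 0 (by rw [ZMod.natCast_self]; exact h00)
  have hdi_pos : 0 < d / i := Nat.div_pos (Nat.le_of_dvd (by omega) hid) hipos
  set j := y0.val % (d / i) with hj_def
  have hjlt : j < d / i := Nat.mod_lt _ hdi_pos
  have h0 : (i : ZMod d) * ((d / i : ℕ) : ZMod d) = 0 := by
    rw [← Nat.cast_mul, Nat.mul_div_cancel' hid, ZMod.natCast_self]
  have hval0 : ((y0.val : ℕ) : ZMod d) = y0 := by simp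
  have hij : (i : ZMod d) * (j : ZMod d) = (i : ZMod d) * y0 := by
    conv_rhs => rw [← hval0, ← Nat.div_add_mod y0.val (d / i)]
    push_cast
    linear_combination (-((y0.val / (d / i) : ℕ) : ZMod d)) * h0
  right
  refine ⟨i, j, hid, by omega, by omega, ?_⟩
  ext p
  obtain ⟨x, y⟩ := p
  simp only [Cset, Set.mem_setOf_eq]
  constructor
  · intro hp
    have hvx : ((x.val : ℕ) : ZMod d) = x := by simp
    obtain ⟨m, hm⟩ := hdvd x.val y (by rw [hvx]; exact hp)
    have hx : x = (i : ZMod d) * ((m : ℕ) : ZMod d) := by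
      rw [← hvx, hm]; push_cast; ring
    have hcom : y0 * x - (i : ZMod d) * y = 0 := hcomm _ hy0 _ hp
    refine ⟨?_, ((m : ℕ) : ZMod d), hx⟩
    show (i : ZMod d) * y - (j : ZMod d) * x = 0
    linear_combination -hcom - ((m : ℕ) : ZMod d) * hij + (y0 - (j : ZMod d)) * hx
  · rintro ⟨hc, k, hk⟩
    apply hcent
    rintro ⟨s, t⟩ hq
    have hvs : ((s.val : ℕ) : ZMod d) = s := by simp
    obtain ⟨m, hm⟩ := hdvd s.val t (by rw [hvs]; exact hq)
    have hs : s = (i : ZMod d) * ((m : ℕ) : ZMod d) := by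
      rw [← hvs, hm]; push_cast; ring
    have hcom : y0 * s - (i : ZMod d) * t = 0 := hcomm _ hy0 _ hq
    show t * x - s * y = 0
    linear_combination (-(k * ((m : ℕ) : ZMod d))) * hij + (k * y0 - y) * hs +
      (t - ((m : ℕ) : ZMod d) * (j : ZMod d)) * hk - k * hcom - ((m : ℕ) : ZMod d) * hc
end

section
/- For d ≥ 3, the number of distinct maximal commutative sets of pairs in ℤ_d × ℤ_d (under the commutation ns - mt ≡ 0 mod d) equals σ(d), the sum of all positive divisors of d. -/
lemma comm_symm {d : ℕ} {p q : ZMod d × ZMod d} (h : Commutes d p q) : Commutes d q p := by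
  unfold Commutes at *; linear_combination -h

/-- An MCS contains anything commuting with all its elements. -/
lemma mcs_mem {d : ℕ} {M : Set (ZMod d × ZMod d)} (hM : IsMCS d M)
    (q : ZMod d × ZMod d) (hq : ∀ p ∈ M, Commutes d p q) : q ∈ M := by
  have h := hM.2 (insert q M) (Set.subset_insert _ _) ?_
  · rw [← h]; exact Set.mem_insert _ _
  · intro p hp r hr
    rcases hp with rfl | hp <;> rcases hr with rfl | hr
    · unfold Commutes; ring
    · exact comm_symm (hq r hr)
    · exact hq p hp
    · exact hM.1 p hp r hr

lemma natCast_val' {d : ℕ} [NeZero d] (a : ZMod d) : ((a.val : ℕ) : ZMod d) = a :=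
  (ZMod.natCast_val a).trans (ZMod.cast_id _ _)

/-- kernel of multiplication by `d/i` is `i·ZMod d`. -/
lemma ker_mul {d i : ℕ} (hi : i ∣ d) (hd : d ≠ 0) (s : ZMod d)
    (h : ((d / i : ℕ) : ZMod d) * s = 0) : ∃ k : ZMod d, s = (i : ZMod d) * k := by
  haveI : NeZero d := ⟨hd⟩
  have hi0 : i ≠ 0 := by rintro rfl; exact hd (Nat.eq_zero_of_zero_dvd hi)
  have hdi0 : 0 < d / i :=
    Nat.div_pos (Nat.le_of_dvd (Nat.pos_of_ne_zero hd) hi) (Nat.pos_of_ne_zero hi0)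
  have h1 : (((d / i) * s.val : ℕ) : ZMod d) = 0 := by
    push_cast [natCast_val']; exact h
  have h2 : d ∣ (d / i) * s.val := (ZMod.natCast_eq_zero_iff _ _).mp h1
  have h3 : i ∣ s.val := by
    have h2' : (d / i) * i ∣ (d / i) * s.val := by
      rw [Nat.div_mul_cancel hi]; exact h2
    exact (Nat.mul_dvd_mul_iff_left hdi0).mp h2'
  refine ⟨((s.val / i : ℕ) : ZMod d), ?_⟩
  rw [← Nat.cast_mul, Nat.mul_div_cancel' h3, natCast_val']

lemma cset_isMCS {d i : ℕ} (j : ℕ) (hi : i ∣ d) (hd : d ≠ 0) : IsMCS d (Cset d i j) := by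
  have hpair : ∀ p ∈ Cset d i j, ∀ q ∈ Cset d i j, Commutes d p q := by
    rintro p ⟨hp1, k1, hk1⟩ q ⟨hq1, k2, hk2⟩
    show p.2 * q.1 - p.1 * q.2 = 0
    rw [hk1, hk2]
    rw [hk1] at hp1; rw [hk2] at hq1
    linear_combination k2 * hp1 - k1 * hq1
  refine ⟨hpair, fun N hsub hN => ?_⟩
  have hgen1 : ((i : ZMod d), (j : ZMod d)) ∈ Cset d i j := ⟨by ring, 1, by ring⟩
  have hgen2 : ((0 : ZMod d), ((d / i : ℕ) : ZMod d)) ∈ Cset d i j := by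
    refine ⟨?_, 0, by ring⟩
    have h : ((i : ZMod d)) * ((d / i : ℕ) : ZMod d) = ((d : ℕ) : ZMod d) := by
      rw [← Nat.cast_mul, Nat.mul_div_cancel' hi]
    simp [h, ZMod.natCast_self]
  apply Set.Subset.antisymm _ hsub
  rintro q hq
  have h1 : Commutes d ((i : ZMod d), (j : ZMod d)) q := hN _ (hsub hgen1) q hq
  have h2 : Commutes d ((0 : ZMod d), ((d / i : ℕ) : ZMod d)) q := hN _ (hsub hgen2) q hq
  unfold Commutes at h1 h2
  simp only at h1 h2
  have h2' : ((d / i : ℕ) : ZMod d) * q.1 = 0 := by linear_combination h2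
  obtain ⟨k, hk⟩ := ker_mul hi hd q.1 h2'
  exact ⟨by linear_combination -h1, k, hk⟩

/-- `Cset` only depends on `i·j mod d`. -/
lemma cset_congr {d i : ℕ} {j j' : ℕ}
    (h : (i : ZMod d) * (j : ZMod d) = (i : ZMod d) * (j' : ZMod d)) :
    Cset d i j = Cset d i j' := by
  ext p
  constructor
  · rintro ⟨h1, k, hk⟩
    refine ⟨?_, k, hk⟩
    rw [hk] at h1 ⊢
    linear_combination h1 + k * h
  · rintro ⟨h1, k, hk⟩
    refine ⟨?_, k, hk⟩
    rw [hk] at h1 ⊢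
    linear_combination h1 - k * h

/-- Every MCS is a `Cset d i j` with `i ∣ d` and `j < d / i`. -/
lemma mcs_eq_cset {d : ℕ} (hd : d ≠ 0) {M : Set (ZMod d × ZMod d)} (hM : IsMCS d M) :
    ∃ i j : ℕ, i ∣ d ∧ j < d / i ∧ M = Cset d i j := by
  haveI : NeZero d := ⟨hd⟩
  classical
  have hzero : ((0 : ZMod d), (0 : ZMod d)) ∈ M := by
    apply mcs_mem hM
    intro p hp; show p.2 * 0 - p.1 * 0 = 0; ring
  have hadd : ∀ p ∈ M, ∀ q ∈ M, p + q ∈ M := by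
    intro p hp q hq
    apply mcs_mem hM
    intro r hr
    have h1 := comm_symm (hM.1 p hp r hr)
    have h2 := comm_symm (hM.1 q hq r hr)
    unfold Commutes at *
    show r.2 * (p + q).1 - r.1 * (p + q).2 = 0
    rw [Prod.fst_add, Prod.snd_add]
    linear_combination h1 + h2
  have hsmul : ∀ p ∈ M, ∀ c : ZMod d, (c * p.1, c * p.2) ∈ M := by
    intro p hp c
    apply mcs_mem hM
    intro r hr
    have h1 := comm_symm (hM.1 p hp r hr)
    unfold Commutes at *
    show r.2 * (c * p.1) - r.1 * (c * p.2) = 0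
    linear_combination c * h1
  set S : ℕ → Prop := fun n => 0 < n ∧ ∃ y, ((n : ZMod d), y) ∈ M with hS
  have hex : ∃ n, S n := ⟨d, Nat.pos_of_ne_zero hd, 0, by simpa using hzero⟩
  set i := Nat.find hex with hidef
  obtain ⟨hipos, y0, hy0⟩ : S i := Nat.find_spec hex
  have hmin : ∀ m, m < i → ¬ S m := fun m hm => Nat.find_min hex hm
  -- every first coordinate of M is a multiple of `i`
  have hmem : ∀ n : ℕ, ∀ y : ZMod d, ((n : ZMod d), y) ∈ M →
      ∃ y', (((n % i : ℕ) : ZMod d), y') ∈ M := by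
    intro n y hn
    have h1 : ((((n / i : ℕ) : ZMod d)) * (i : ZMod d), (((n / i : ℕ) : ZMod d)) * y0) ∈ M :=
      hsmul _ hy0 _
    have h2 := hadd _ hn _ (hsmul _ h1 (-1))
    rw [Prod.mk_add_mk] at h2
    refine ⟨y + -1 * (((n / i : ℕ) : ZMod d) * y0), ?_⟩
    have e0 : ((n % i + (n / i) * i : ℕ) : ZMod d) = (n : ZMod d) := by
      rw [Nat.mod_add_div']
    push_cast at e0
    have e1 : ((n % i : ℕ) : ZMod d) =
        (n : ZMod d) + -1 * (((n / i : ℕ) : ZMod d) * (i : ZMod d)) := by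
      linear_combination e0
    rw [e1]
    exact h2
  have hX : ∀ p ∈ M, ∃ k : ZMod d, p.1 = (i : ZMod d) * k := by
    intro p hp
    have hp1 : ((p.1.val : ZMod d), p.2) ∈ M := by rw [natCast_val']; exact hp
    obtain ⟨y', hy'⟩ := hmem p.1.val p.2 hp1
    have hmod : p.1.val % i = 0 := by
      by_contra hne
      exact hmin _ (Nat.mod_lt _ hipos) ⟨Nat.pos_of_ne_zero hne, y', hy'⟩
    have hdvd : i ∣ p.1.val := Nat.dvd_of_mod_eq_zero hmod
    refine ⟨((p.1.val / i : ℕ) : ZMod d), ?_⟩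
    rw [← Nat.cast_mul, Nat.mul_div_cancel' hdvd, natCast_val']
  -- i divides d
  have hid : i ∣ d := by
    obtain ⟨y', hy'⟩ := hmem d 0 (by simpa using hzero)
    by_contra hndvd
    have hmodpos : 0 < d % i :=
      Nat.pos_of_ne_zero (fun h => hndvd (Nat.dvd_of_mod_eq_zero h))
    exact hmin _ (Nat.mod_lt _ hipos) ⟨hmodpos, y', hy'⟩
  -- M = Cset d i j with j = y0.val
  set j := y0.val with hjdef
  have hy0' : (((i : ℕ) : ZMod d), ((j : ℕ) : ZMod d)) ∈ M := by rw [natCast_val']; exact hy0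
  have hMC : M = Cset d i j := by
    apply Set.Subset.antisymm
    · intro p hp
      have hc := hM.1 p hp _ hy0'
      unfold Commutes at hc; simp only at hc
      exact ⟨by linear_combination hc, hX p hp⟩
    · rintro q ⟨hq1, k, hk⟩
      apply mcs_mem hM
      intro p hp
      have hc := hM.1 p hp _ hy0'
      unfold Commutes at hc; simp only at hc
      have hp1 : (i : ZMod d) * p.2 - (j : ZMod d) * p.1 = 0 := by linear_combination hc
      obtain ⟨a, ha⟩ := hX p hp
      show p.2 * q.1 - p.1 * q.2 = 0
      rw [hk, ha]; rw [hk] at hq1; rw [ha] at hp1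
      linear_combination k * hp1 - a * hq1
  -- reduce j mod d/i
  have hdi : i * (d / i) = d := Nat.mul_div_cancel' hid
  have hdipos : 0 < d / i := Nat.div_pos (Nat.le_of_dvd (Nat.pos_of_ne_zero hd) hid) hipos
  refine ⟨i, j % (d / i), hid, Nat.mod_lt _ hdipos, ?_⟩
  rw [hMC]
  apply cset_congr
  have e : j % (d / i) + (d / i) * (j / (d / i)) = j := Nat.mod_add_div j (d / i)
  have hz : ((i * ((d / i) * (j / (d / i))) : ℕ) : ZMod d) = 0 := by
    rw [← mul_assoc, hdi]
    push_cast
    simp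
  have hcast : ((i * j : ℕ) : ZMod d) = ((i * (j % (d / i)) : ℕ) : ZMod d) := by
    conv_lhs => rw [← e]
    push_cast at hz ⊢
    linear_combination hz
  push_cast at hcast
  linear_combination hcast

/-- From a `ZMod d` equation of casts, an integer divisibility. -/
lemma cast_eq_int_dvd {d a b : ℕ} (h : ((a : ℕ) : ZMod d) = ((b : ℕ) : ZMod d)) :
    (d : ℤ) ∣ (b : ℤ) - (a : ℤ) :=
  ((ZMod.natCast_eq_natCast_iff a b d).mp h).dvd

lemma dvd_of_cast_mul {d i i' : ℕ} (hi : i ∣ d) (k : ZMod d)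
    (hk : (i' : ZMod d) = (i : ZMod d) * k) : i ∣ i' := by
  rcases Nat.eq_zero_or_pos d with rfl | hd0
  · -- ZMod 0 = ℤ
    have h : (i : ℤ) ∣ (i' : ℤ) := ⟨k, hk⟩
    exact_mod_cast h
  haveI : NeZero d := ⟨hd0.ne'⟩
  have h1 : ((i * k.val : ℕ) : ZMod d) = ((i' : ℕ) : ZMod d) := by
    push_cast [natCast_val']
    exact hk.symm
  have h2 : (d : ℤ) ∣ (i' : ℤ) - (i * k.val : ℕ) := cast_eq_int_dvd h1
  have h3 : (i : ℤ) ∣ (i' : ℤ) := by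
    have hi' : (i : ℤ) ∣ (d : ℤ) := Int.natCast_dvd_natCast.mpr hi
    have h4 : (i : ℤ) ∣ (i' : ℤ) - (i * k.val : ℕ) := hi'.trans h2
    have h5 : (i : ℤ) ∣ ((i * k.val : ℕ) : ℤ) := by push_cast; exact Dvd.intro _ rfl
    have := dvd_add h4 h5
    simpa using this
  exact_mod_cast h3

/-- Injectivity of the parametrization. -/
lemma cset_inj {d i i' j j' : ℕ} (hd : d ≠ 0) (hi : i ∣ d) (hi' : i' ∣ d)
    (hj : j < d / i) (hj' : j' < d / i') (heq : Cset d i j = Cset d i' j') :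
    i = i' ∧ j = j' := by
  haveI : NeZero d := ⟨hd⟩
  have hipos : 0 < i := Nat.pos_of_ne_zero (by rintro rfl; exact hd (Nat.eq_zero_of_zero_dvd hi))
  have hii : i = i' := by
    have m1 : (((i' : ℕ) : ZMod d), ((j' : ℕ) : ZMod d)) ∈ Cset d i j := by
      rw [heq]; exact ⟨by ring, 1, by ring⟩
    have m2 : (((i : ℕ) : ZMod d), ((j : ℕ) : ZMod d)) ∈ Cset d i' j' := by
      rw [← heq]; exact ⟨by ring, 1, by ring⟩
    obtain ⟨_, k, hk⟩ := m1
    obtain ⟨_, k', hk'⟩ := m2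
    exact Nat.dvd_antisymm (dvd_of_cast_mul hi k hk) (dvd_of_cast_mul hi' k' hk')
  subst hii
  refine ⟨rfl, ?_⟩
  -- (i, j') ∈ Cset d i j' = Cset d i j gives i*j' = i*j mod d
  have m1 : (((i : ℕ) : ZMod d), ((j' : ℕ) : ZMod d)) ∈ Cset d i j := by
    rw [heq]; exact ⟨by ring, 1, by ring⟩
  obtain ⟨h1, -⟩ := m1
  simp only at h1
  have h2 : ((i * j' : ℕ) : ZMod d) = ((i * j : ℕ) : ZMod d) := by
    push_cast
    linear_combination h1
  have h3 : (d : ℤ) ∣ (i : ℤ) * j - (i : ℤ) * j' := by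
    have := cast_eq_int_dvd h2
    push_cast at this
    convert this using 1
  have hdi : i * (d / i) = d := Nat.mul_div_cancel' hi
  have h4 : ((d / i : ℕ) : ℤ) ∣ (j : ℤ) - (j' : ℤ) := by
    have hd' : (d : ℤ) = (i : ℤ) * ((d / i : ℕ) : ℤ) := by exact_mod_cast hdi.symm
    rw [hd'] at h3
    rw [← mul_sub] at h3
    exact (mul_dvd_mul_iff_left (by exact_mod_cast hipos.ne' : (i : ℤ) ≠ 0)).mp h3
  by_contra hne
  have habs : (0 : ℤ) < |(j : ℤ) - (j' : ℤ)| := by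
    rw [abs_pos, sub_ne_zero]
    exact_mod_cast hne
  have h5 : ((d / i : ℕ) : ℤ) ≤ |(j : ℤ) - (j' : ℤ)| :=
    Int.le_of_dvd habs ((dvd_abs _ _).mpr h4)
  have h6 : |(j : ℤ) - (j' : ℤ)| < ((d / i : ℕ) : ℤ) := by
    rw [abs_sub_lt_iff]
    constructor <;> [skip; skip] <;> push_cast <;> omega
  omega

/-- The number of maximal commutative sets in `ℤ_d × ℤ_d` equals `σ(d)`,
the sum of all positive divisors of `d`. -/
theorem mcs_count (d : ℕ) (hd : 3 ≤ d) :
    {M : Set (ZMod d × ZMod d) | IsMCS d M}.ncard = ∑ k ∈ d.divisors, k := by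
  classical
  have hd0 : d ≠ 0 := by omega
  set T : Finset ((_ : ℕ) × ℕ) := d.divisors.sigma (fun i => Finset.range (d / i)) with hT
  have hset : {M : Set (ZMod d × ZMod d) | IsMCS d M}
      = ↑(T.image (fun s => Cset d s.1 s.2)) := by
    ext M
    simp only [Set.mem_setOf_eq, Finset.coe_image, Set.mem_image, Finset.mem_coe, hT,
      Finset.mem_sigma, Finset.mem_range, Nat.mem_divisors]
    constructor
    · intro hM
      obtain ⟨i, j, hi, hj, rfl⟩ := mcs_eq_cset hd0 hM
      exact ⟨⟨i, j⟩, ⟨⟨hi, hd0⟩, hj⟩, rfl⟩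
    · rintro ⟨⟨i, j⟩, ⟨⟨hi, -⟩, hj⟩, rfl⟩
      exact cset_isMCS j hi hd0
  rw [hset, Set.ncard_coe_finset, Finset.card_image_of_injOn]
  · rw [hT, Finset.card_sigma]
    simp only [Finset.card_range]
    simpa using Nat.sum_div_divisors d id
  · rintro ⟨i, j⟩ h1 ⟨i', j'⟩ h2 heq
    simp only [hT, Finset.mem_coe, Finset.mem_sigma, Finset.mem_range, Nat.mem_divisors] at h1 h2
    obtain ⟨e1, e2⟩ := cset_inj hd0 h1.1.1 h2.1.1 h1.2 h2.2 heq
    cases e1; cases e2; rfl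
end

section
/- Let d ≥ 3, (m,n) ∈ ℤ_d × ℤ_d with m ≠ 0, and let d_m = gcd(d,m) and d_{m,n} = gcd(d,m,n). Then (m,n) ∈ C_{i,j} (for i | d, i ≠ 0, 0 ≤ j ≤ d/i - 1) if and only if i | d_m, (d_m/i) | d_{m,n}, and j ≡ (i·n/d_m)·(m/d_m)^{-1} (mod d/d_m) up to adding multiples t·(d/d_m) for t = 0, ..., d_m/i - 1, where (m/d_m)^{-1} is the inverse of m/d_m modulo d/d_m. -/
/-- Membership of `(m,n)` (with `m ≠ 0`) in the maximal commutative set `C_{i,j}`: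
writing `d_m = gcd(d,m)` and `d_{m,n} = gcd(d,m,n)`, we have `(m,n) ∈ C_{i,j}`
iff `i ∣ d_m`, `(d_m/i) ∣ d_{m,n}`, and
`j = (i·n/d_m)·(m/d_m)⁻¹ (mod d/d_m) + t·(d/d_m)` for some `0 ≤ t ≤ d_m/i - 1`. -/
theorem mem_Cset_iff (d : ℕ) (hd : 3 ≤ d) (m n : ℕ) (hm : m < d) (hn : n < d)
    (hm0 : m ≠ 0) (i j : ℕ) (hi : i ∣ d) (hi0 : i ≠ 0) (hj : j ≤ d / i - 1) :
    ((m : ZMod d), (n : ZMod d)) ∈ Cset d i j ↔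
      i ∣ Nat.gcd d m ∧ (Nat.gcd d m / i) ∣ Nat.gcd (Nat.gcd d m) n ∧
      ∃ t : ℕ, t ≤ Nat.gcd d m / i - 1 ∧
        j = (((i * n / Nat.gcd d m : ℕ) : ZMod (d / Nat.gcd d m)) *
              ((m / Nat.gcd d m : ℕ) : ZMod (d / Nat.gcd d m))⁻¹).val +
            t * (d / Nat.gcd d m) := by
  have hd0 : 0 < d := by omega
  haveI : NeZero d := ⟨by omega⟩
  set g := Nat.gcd d m with hg
  have hg0 : 0 < g := Nat.gcd_pos_of_pos_left _ hd0
  have hgd : g ∣ d := Nat.gcd_dvd_left d m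
  have hgm : g ∣ m := Nat.gcd_dvd_right d m
  set d' := d / g with hd'
  set m' := m / g with hm'
  have hdfac : d = g * d' := (Nat.mul_div_cancel' hgd).symm
  have hmfac : m = g * m' := (Nat.mul_div_cancel' hgm).symm
  have hd'0 : 0 < d' := Nat.div_pos (Nat.le_of_dvd hd0 hgd) hg0
  haveI : NeZero d' := ⟨hd'0.ne'⟩
  have hcop : Nat.Coprime m' d' := (Nat.coprime_div_gcd_div_gcd hg0).symm
  set a := i * n / g with ha
  set e : ZMod d' := ((a : ℕ) : ZMod d') * ((m' : ℕ) : ZMod d')⁻¹ with he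
  set v := e.val with hv
  have hvlt : v < d' := ZMod.val_lt e
  have hgZ : (g : ℤ) ≠ 0 := by exact_mod_cast hg0.ne'
  -- the key congruence, assuming g ∣ i*n
  have key : g ∣ i * n → v * m' ≡ a [MOD d'] := by
    intro hgin
    have : ((v * m' : ℕ) : ZMod d') = ((a : ℕ) : ZMod d') := by
      push_cast
      have hev : ((v : ℕ) : ZMod d') = e := by simp [hv, ZMod.natCast_val, ZMod.cast_id]
      rw [hev, he, mul_assoc, mul_comm (((m' : ℕ) : ZMod d'))⁻¹ _,
        ZMod.coe_mul_inv_eq_one m' hcop, mul_one]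
    exact (ZMod.natCast_eq_natCast_iff _ _ _).mp this
  have hdi1 : 1 ≤ d / i := Nat.div_pos (Nat.le_of_dvd hd0 hi) (Nat.pos_of_ne_zero hi0)
  have hjlt : j < d / i := by omega
  -- first condition rephrased
  have hcond1 : ((i : ZMod d) * n - (j : ZMod d) * m = 0) ↔ i * n ≡ j * m [MOD d] := by
    rw [sub_eq_zero, ← Nat.cast_mul, ← Nat.cast_mul, ZMod.natCast_eq_natCast_iff]
  -- d/i factorization under i ∣ g
  have hdifac : i ∣ g → d / i = (g / i) * d' := by
    intro hig
    have : d = i * ((g / i) * d') := by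
      rw [hdfac]; rw [← Nat.mul_assoc, Nat.mul_div_cancel' hig]
    rw [this, Nat.mul_div_cancel_left _ (Nat.pos_of_ne_zero hi0)]
  constructor
  · rintro ⟨h1, k, h2⟩
    replace h1 : (i : ZMod d) * (n : ZMod d) - (j : ZMod d) * (m : ZMod d) = 0 := h1
    replace h2 : (m : ZMod d) = (i : ZMod d) * k := h2
    -- x-condition gives i ∣ m
    have him : i ∣ m := by
      have h2' : m ≡ i * k.val [MOD d] := by
        apply (ZMod.natCast_eq_natCast_iff _ _ _).mp
        push_cast
        rw [h2]; congr 1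
        simp [ZMod.natCast_val, ZMod.cast_id]
      have hdvd : (d : ℤ) ∣ (i : ℤ) * k.val - m := by
        have := Nat.modEq_iff_dvd.mp h2'; push_cast at this ⊢; exact this
      have hid : (i : ℤ) ∣ d := Int.natCast_dvd_natCast.mpr hi
      have h3 : (i : ℤ) ∣ (i : ℤ) * k.val - m := hid.trans hdvd
      have h4 : (i : ℤ) ∣ (i : ℤ) * k.val := Dvd.intro _ rfl
      have h5 : (i : ℤ) ∣ (m : ℤ) := by
        have := dvd_sub h4 h3; simpa using this
      exact_mod_cast h5
    have hig : i ∣ g := Nat.dvd_gcd hi him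
    have hcong : (d : ℤ) ∣ (j : ℤ) * m - (i : ℤ) * n := by
      have := Nat.modEq_iff_dvd.mp (hcond1.mp h1); push_cast at this ⊢; exact this
    have hgin : g ∣ i * n := by
      have hg1 : (g : ℤ) ∣ (j : ℤ) * m - (i : ℤ) * n :=
        (Int.natCast_dvd_natCast.mpr hgd).trans hcong
      have hg2 : (g : ℤ) ∣ (j : ℤ) * m := Dvd.dvd.mul_left (Int.natCast_dvd_natCast.mpr hgm) _
      have h5 : (g : ℤ) ∣ (i : ℤ) * n := by
        have := dvd_sub hg2 hg1; simpa using this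
      exact_mod_cast h5
    have hafac : i * n = g * a := (Nat.mul_div_cancel' hgin).symm
    refine ⟨hig, ?_, ?_⟩
    · refine Nat.dvd_gcd (Nat.div_dvd_of_dvd hig) ?_
      have h6 : i * (g / i) ∣ i * n := by rwa [Nat.mul_div_cancel' hig]
      exact (Nat.mul_dvd_mul_iff_left (Nat.pos_of_ne_zero hi0)).mp h6
    · -- extract t
      have hjv : j ≡ v [MOD d'] := by
      -- d' ∣ j*m' - a over ℤ
        have hdvd' : (d' : ℤ) ∣ (j : ℤ) * m' - (a : ℤ) := by
          have e1 : ((d : ℕ) : ℤ) = (g : ℤ) * d' := by exact_mod_cast hdfac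
          have e2 : ((m : ℕ) : ℤ) = (g : ℤ) * m' := by exact_mod_cast hmfac
          have e3 : ((i : ℤ) * n : ℤ) = (g : ℤ) * a := by exact_mod_cast hafac
          have heq : (g : ℤ) * ((j : ℤ) * m' - a) = (j : ℤ) * m - (i : ℤ) * n := by
            rw [e2, e3]; ring
          have hc2 : (g : ℤ) * d' ∣ (g : ℤ) * ((j : ℤ) * m' - a) := by
            rw [heq, ← e1]; exact hcong
          exact (mul_dvd_mul_iff_left hgZ).mp hc2
        have hjm : j * m' ≡ v * m' [MOD d'] := by
          have h7 : j * m' ≡ a [MOD d'] := by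
            rw [Nat.modEq_iff_dvd]
            push_cast
            exact dvd_sub_comm.mp hdvd'
          exact h7.trans (key hgin).symm
        exact Nat.ModEq.cancel_right_of_coprime hcop.symm hjm
      -- now j = v + t * d'
      have hmod : j % d' = v := by
        have := hjv.symm
        rw [Nat.ModEq] at this
        rw [← this, Nat.mod_eq_of_lt hvlt]
      have hvle : v ≤ j := hmod ▸ Nat.mod_le j d'
      have hdd : d' ∣ j - v := (Nat.modEq_iff_dvd' hvle).mp hjv.symm
      obtain ⟨t, htq⟩ := hdd
      have hcomm : d' * t = t * d' := Nat.mul_comm _ _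
      have hjeq : j = v + t * d' := by omega
      refine ⟨t, ?_, hjeq⟩
      have hgi1 : 1 ≤ g / i := Nat.div_pos (Nat.le_of_dvd hg0 hig) (Nat.pos_of_ne_zero hi0)
      have hjlt' : j < (g / i) * d' := by rw [← hdifac hig]; exact hjlt
      have h9 : t * d' < (g / i) * d' := by omega
      have htlt : t < g / i := Nat.lt_of_mul_lt_mul_right h9
      omega
  · rintro ⟨hig, hdn, t, ht, hjeq⟩
    have him : i ∣ m := hig.trans hgm
    have hgin : g ∣ i * n := by
      have h8 : (g / i) ∣ n := hdn.trans (Nat.gcd_dvd_right _ _)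
      calc g = i * (g / i) := (Nat.mul_div_cancel' hig).symm
        _ ∣ i * n := Nat.mul_dvd_mul_left i h8
    have hafac : i * n = g * a := (Nat.mul_div_cancel' hgin).symm
    refine ⟨?_, ⟨((m / i : ℕ) : ZMod d), ?_⟩⟩
    · show (i : ZMod d) * (n : ZMod d) - (j : ZMod d) * (m : ZMod d) = 0
      rw [hcond1]
      have hjv : j ≡ v [MOD d'] := by
        rw [hjeq]
        show (v + t * d') % d' = v % d'
        rw [Nat.add_mul_mod_self_right]
      have hjm : j * m' ≡ a [MOD d'] := (hjv.mul_right m').trans (key hgin)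
      have hdvd' : (d' : ℤ) ∣ (j : ℤ) * m' - (a : ℤ) := by
        have := Nat.modEq_iff_dvd.mp hjm; push_cast at this; exact dvd_sub_comm.mp this
      rw [Nat.ModEq.comm, Nat.modEq_iff_dvd]
      have e1 : ((d : ℕ) : ℤ) = (g : ℤ) * d' := by exact_mod_cast hdfac
      have e2 : ((m : ℕ) : ℤ) = (g : ℤ) * m' := by exact_mod_cast hmfac
      have e3 : ((i * n : ℕ) : ℤ) = (g : ℤ) * a := by exact_mod_cast hafac
      push_cast at e1 e2 e3 ⊢
      rw [e1, e2]
      obtain ⟨c, hc⟩ := hdvd'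
      exact ⟨-c, by rw [e3]; linear_combination (-(g : ℤ)) * hc⟩
    · show (m : ZMod d) = (i : ZMod d) * ((m / i : ℕ) : ZMod d)
      rw [← Nat.cast_mul, Nat.mul_div_cancel' him]
end

section
/- Let d ≥ 3 and (m,n) with m ≠ 0 and gcd(d,m,n) = 1, and write d_m = gcd(d,m). Then (m,n) lies in exactly one maximal commutative set C_{i,j}, namely the one with i = d_m and j = n·(m/d_m)^{-1} mod (d/d_m). -/
/-- If `m ≠ 0` and `gcd(d,m,n) = 1`, then `(m,n)` lies in exactly one maximal
commutative set `C_{i,j}`, namely the one with `i = gcd(d,m)` and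
`j = n·(m/d_m)⁻¹ mod (d/d_m)`. -/
theorem mem_Cset_unique (d : ℕ) (hd : 3 ≤ d) (m n : ℕ) (hm : m < d) (hn : n < d)
    (hm0 : m ≠ 0) (hcop : Nat.gcd (Nat.gcd d m) n = 1)
    (i j : ℕ) (hi : i ∣ d) (hi0 : i ≠ 0) (hj : j ≤ d / i - 1) :
    ((m : ZMod d), (n : ZMod d)) ∈ Cset d i j ↔
      i = Nat.gcd d m ∧
      j = (((n : ℕ) : ZMod (d / Nat.gcd d m)) *
            ((m / Nat.gcd d m : ℕ) : ZMod (d / Nat.gcd d m))⁻¹).val := by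
  have hd0 : 0 < d := by omega
  haveI : NeZero d := ⟨by omega⟩
  set g := Nat.gcd d m with hg
  have hg0 : 0 < g := Nat.gcd_pos_of_pos_left _ hd0
  have hgd : g ∣ d := Nat.gcd_dvd_left d m
  have hgm : g ∣ m := Nat.gcd_dvd_right d m
  set d' := d / g with hd'
  set m' := m / g with hm'
  have hdd' : d = g * d' := (Nat.mul_div_cancel' hgd).symm
  have hmm' : m = g * m' := (Nat.mul_div_cancel' hgm).symm
  have hd'0 : 0 < d' := Nat.div_pos (Nat.le_of_dvd hd0 hgd) hg0
  haveI : NeZero d' := ⟨hd'0.ne'⟩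
  have hcop' : Nat.gcd d' m' = 1 := Nat.coprime_div_gcd_div_gcd hg0
  -- membership conditions restated
  have hmem : (((m : ZMod d), (n : ZMod d)) ∈ Cset d i j) ↔
      ((d : ℤ) ∣ (i * n - j * m : ℤ) ∧ i ∣ m) := by
    constructor
    · rintro ⟨h1, k, h2⟩
      constructor
      · rw [← ZMod.intCast_zmod_eq_zero_iff_dvd]
        push_cast
        simpa using h1
      · -- from (m : ZMod d) = i * k
        have : ((m : ℕ) : ZMod d) = ((i * k.val : ℕ) : ZMod d) := by
          push_cast
          rw [ZMod.natCast_val, ZMod.cast_id]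
          exact h2
        have hmod := (ZMod.natCast_eq_natCast_iff _ _ _).mp this
        have hdvd : (d : ℤ) ∣ (i * k.val : ℤ) - (m : ℤ) := hmod.dvd
        have hidvd : (i : ℤ) ∣ (m : ℤ) := by
          have h1 : (i : ℤ) ∣ (i * k.val : ℤ) := ⟨k.val, rfl⟩
          have h2 : (i : ℤ) ∣ (i * k.val : ℤ) - (m : ℤ) :=
            dvd_trans (Int.natCast_dvd_natCast.mpr hi) hdvd
          have := dvd_sub h1 h2
          simpa using this
        exact_mod_cast hidvd
    · rintro ⟨h1, h2⟩
      refine ⟨?_, ((m / i : ℕ) : ZMod d), ?_⟩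
      · rw [← ZMod.intCast_zmod_eq_zero_iff_dvd] at h1
        push_cast at h1 ⊢
        simpa using h1
      · have : m = i * (m / i) := (Nat.mul_div_cancel' h2).symm
        conv_lhs => rw [this]
        push_cast
        ring
  rw [hmem]
  constructor
  · rintro ⟨h1, h2⟩
    -- set a := m / i, D := d / i
    set a := m / i with ha
    set D := d / i with hD
    have hma : m = i * a := (Nat.mul_div_cancel' h2).symm
    have hdD : d = i * D := (Nat.mul_div_cancel' hi).symm
    have hD0 : 0 < D := Nat.div_pos (Nat.le_of_dvd hd0 hi) (Nat.pos_of_ne_zero hi0)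
    have hDdvd : (D : ℤ) ∣ ((n : ℤ) - j * a) := by
      have : (i * D : ℤ) ∣ (i : ℤ) * ((n : ℤ) - j * a) := by
        have : (i * n - j * m : ℤ) = (i : ℤ) * ((n : ℤ) - j * a) := by
          rw [hma]; push_cast; ring
        rw [← this]
        exact_mod_cast hdD ▸ h1
      exact (mul_dvd_mul_iff_left (by exact_mod_cast hi0 : (i : ℤ) ≠ 0)).mp this
    set g' := Nat.gcd D a with hg'
    have hg'n : (g' : ℤ) ∣ (n : ℤ) := by
      have h1 : (g' : ℤ) ∣ ((n : ℤ) - j * a) :=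
        dvd_trans (Int.natCast_dvd_natCast.mpr (Nat.gcd_dvd_left D a)) hDdvd
      have h2 : (g' : ℤ) ∣ (j : ℤ) * a :=
        Dvd.dvd.mul_left (Int.natCast_dvd_natCast.mpr (Nat.gcd_dvd_right D a)) _
      have := dvd_add h1 h2
      simpa using this
    have hg'n' : g' ∣ n := by exact_mod_cast hg'n
    have hig'g : i * g' ∣ g := by
      apply Nat.dvd_gcd
      · rw [hdD]; exact mul_dvd_mul_left i (Nat.gcd_dvd_left D a)
      · rw [hma]; exact mul_dvd_mul_left i (Nat.gcd_dvd_right D a)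
    have hg'1 : g' = 1 := by
      have hg'g : g' ∣ g := dvd_trans (dvd_mul_left g' i) hig'g
      have := Nat.dvd_gcd hg'g hg'n'
      rw [hcop] at this
      exact Nat.eq_one_of_dvd_one this
    have hieq : i = g := by
      have : g = Nat.gcd (i * D) (i * a) := by rw [← hdD, ← hma]
      rw [Nat.gcd_mul_left, ← hg', hg'1, mul_one] at this
      exact this.symm
    have hDd' : D = d' := by rw [hD, hd', hieq]
    have haM' : a = m' := by rw [ha, hm', hieq]
    subst hieq
    refine ⟨rfl, ?_⟩
    -- (j : ZMod D) = n * a⁻¹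
    haveI : NeZero D := ⟨hD0.ne'⟩
    have hcopa : Nat.gcd a D = 1 := by rw [Nat.gcd_comm]; exact hcop'
    have hunit : (a : ZMod D) * (a : ZMod D)⁻¹ = 1 := ZMod.coe_mul_inv_eq_one a hcopa
    have hjD : ((j : ℕ) : ZMod D) = (n : ZMod D) * (a : ZMod D)⁻¹ := by
      have h0 : (((n : ℤ) - j * a : ℤ) : ZMod D) = 0 :=
        (ZMod.intCast_zmod_eq_zero_iff_dvd _ _).mpr hDdvd
      push_cast at h0
      have hna : (n : ZMod D) = (j : ZMod D) * a := by linear_combination h0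
      rw [hna, mul_assoc, hunit, mul_one]
    have hjlt : j < D := by
      have : j ≤ D - 1 := hj
      omega
    calc j = ((j : ℕ) : ZMod D).val := (ZMod.val_cast_of_lt hjlt).symm
      _ = ((n : ZMod D) * (a : ZMod D)⁻¹).val := by rw [hjD]
  · rintro ⟨hieq, hjeq⟩
    subst hieq
    have hcopm : Nat.gcd m' d' = 1 := by rwa [Nat.gcd_comm]
    have hunit : (m' : ZMod d') * (m' : ZMod d')⁻¹ = 1 := ZMod.coe_mul_inv_eq_one m' hcopm
    have hjD : ((j : ℕ) : ZMod d') = (n : ZMod d') * (m' : ZMod d')⁻¹ := by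
      rw [hjeq, ZMod.natCast_val, ZMod.cast_id]
    have hdvd' : (d' : ℤ) ∣ ((n : ℤ) - j * m') := by
      rw [← ZMod.intCast_zmod_eq_zero_iff_dvd]
      push_cast
      rw [hjD, mul_assoc, mul_comm ((m' : ZMod d'))⁻¹, ← mul_assoc, mul_assoc, hunit, mul_one]
      ring
    constructor
    · have : (d : ℤ) ∣ (g : ℤ) * ((n : ℤ) - j * m') := by
        rw [hdd']; push_cast; exact mul_dvd_mul_left _ hdvd'
      have heq : (g : ℤ) * ((n : ℤ) - j * m') = (g * n - j * m : ℤ) := by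
        rw [hmm']; push_cast; ring
      rwa [heq] at this
    · rw [hmm']; exact dvd_mul_right g m'
  done
end

section
/- Let d ≥ 3 and n ∈ ℤ_d with n ≠ 0. The pair (0,n) lies in C_{i,j} (with i | d, i ≠ 0, 0 ≤ j ≤ d/i - 1) if and only if (d/i) divides gcd(d,n); and it lies in C_{0,0} always. In particular, if gcd(d,n) = 1, then C_{0,0} = {(0,y) : y ∈ ℤ_d} is the unique maximal commutative set containing (0,n). -/
/-- For `n ≠ 0`: `(0,n) ∈ C_{i,j}` iff `(d/i) ∣ gcd(d,n)`; moreover `(0,n)`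
always lies in `C_{0,0}`, and if `gcd(d,n) = 1` then `C_{0,0}` is the unique
maximal commutative set containing `(0,n)`. -/
theorem zero_n_mem_Cset (d : ℕ) (hd : 3 ≤ d) (n : ℕ) (hn : n < d) (hn0 : n ≠ 0) :
    (∀ i j : ℕ, i ∣ d → i ≠ 0 → j ≤ d / i - 1 →
      (((0 : ZMod d), (n : ZMod d)) ∈ Cset d i j ↔ (d / i) ∣ Nat.gcd d n)) ∧
    ((0 : ZMod d), (n : ZMod d)) ∈ Cset d 0 0 ∧
    (Nat.gcd d n = 1 → ∀ M : Set (ZMod d × ZMod d), IsMCS d M →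
      ((0 : ZMod d), (n : ZMod d)) ∈ M → M = Cset d 0 0) := by
  have hd0 : d ≠ 0 := by omega
  haveI : NeZero d := ⟨hd0⟩
  refine ⟨?_, ?_, ?_⟩
  · intro i j hi hi0 hj
    constructor
    · rintro ⟨h1, -⟩
      simp only [mul_zero, sub_zero] at h1
      rw [← Nat.cast_mul, ZMod.natCast_eq_zero_iff] at h1
      have hdin : d / i ∣ n := by
        rcases h1 with ⟨c, hc⟩
        refine ⟨c, ?_⟩
        have : i * (d / i * c) = i * n := by
          rw [← mul_assoc, Nat.mul_div_cancel' hi, ← hc, mul_comm]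
        exact (Nat.eq_of_mul_eq_mul_left (Nat.pos_of_ne_zero hi0) this).symm
      exact Nat.dvd_gcd (Nat.div_dvd_of_dvd hi) hdin
    · intro h
      have hdin : d / i ∣ n := h.trans (Nat.gcd_dvd_right d n)
      have h1 : ((i : ZMod d) * n = 0) := by
        rw [← Nat.cast_mul, ZMod.natCast_eq_zero_iff]
        rcases hdin with ⟨c, hc⟩
        exact ⟨c, by rw [hc, ← mul_assoc, Nat.mul_div_cancel' hi]⟩
      exact ⟨by simpa using h1, 0, by simp⟩
  · exact ⟨by simp, 0, by simp⟩
  · intro hcop M hM hmem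
    have hunit : IsUnit ((n : ZMod d)) := by
      rw [ZMod.isUnit_iff_coprime]
      rwa [Nat.Coprime, Nat.gcd_comm]
    have hsub : M ⊆ Cset d 0 0 := by
      intro p hp
      have := hM.1 p hp _ hmem
      simp only [Commutes, mul_zero, zero_sub, neg_eq_zero] at this
      have hp1 : p.1 = 0 := (hunit.mul_left_eq_zero).mp this
      exact ⟨by simp [hp1], 0, by simp [hp1]⟩
    have hcomm : ∀ p ∈ Cset d 0 0, ∀ q ∈ Cset d 0 0, Commutes d p q := by
      rintro p ⟨-, kp, hp⟩ q ⟨-, kq, hq⟩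
      simp only [Nat.cast_zero, zero_mul] at hp hq
      simp [Commutes, hp, hq]
    exact (hM.2 _ hsub hcomm).symm ▸ rfl
end

section
/- Let d ≥ 4 be even and Δ = {(0, d/2), (d/2, 0), (d/2, d/2)} ⊆ ℤ_d × ℤ_d. Then every maximal commutative set (either C_{0,0} or some C_{i,j} with i | d, i ≠ 0, 0 ≤ j ≤ d/i - 1) contains at least one element of Δ. -/

lemma mul_half_even (d n : ℕ) (he : 2 ∣ d) (hn : 2 ∣ n) :
    (n : ZMod d) * ((d / 2 : ℕ) : ZMod d) = 0 := by
  obtain ⟨c, hc⟩ := hn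
  have h : n * (d / 2) = c * d := by
    rw [hc, mul_comm 2 c, mul_assoc, Nat.mul_div_cancel' he]
  calc (n : ZMod d) * ((d / 2 : ℕ) : ZMod d) = ((n * (d / 2) : ℕ) : ZMod d) := by push_cast; ring
    _ = ((c * d : ℕ) : ZMod d) := by rw [h]
    _ = 0 := by push_cast [ZMod.natCast_self]; ring

lemma mul_half_odd (d n : ℕ) (he : 2 ∣ d) (hn : ¬ 2 ∣ n) :
    (n : ZMod d) * ((d / 2 : ℕ) : ZMod d) = ((d / 2 : ℕ) : ZMod d) := by
  obtain ⟨c, hc⟩ := Nat.odd_iff.mpr (Nat.two_dvd_ne_zero.mp hn)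
  have h : n * (d / 2) = c * d + d / 2 := by
    rw [hc, add_mul, one_mul, mul_comm 2 c, mul_assoc, Nat.mul_div_cancel' he]
  calc (n : ZMod d) * ((d / 2 : ℕ) : ZMod d) = ((n * (d / 2) : ℕ) : ZMod d) := by push_cast; ring
    _ = ((c * d + d / 2 : ℕ) : ZMod d) := by rw [h]
    _ = ((d / 2 : ℕ) : ZMod d) := by push_cast [ZMod.natCast_self]; ring

/-- For even `d ≥ 4` and `Δ = {(0,d/2), (d/2,0), (d/2,d/2)}`, every maximal
commutative set (`C_{0,0}` or `C_{i,j}` with `i ∣ d`, `i ≠ 0`, `j ≤ d/i - 1`)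
contains at least one element of `Δ`. -/
theorem every_mcs_meets_delta (d : ℕ) (hd : 4 ≤ d) (he : 2 ∣ d) :
    (∃ p ∈ ({((0 : ZMod d), ((d / 2 : ℕ) : ZMod d)),
             (((d / 2 : ℕ) : ZMod d), (0 : ZMod d)),
             (((d / 2 : ℕ) : ZMod d), ((d / 2 : ℕ) : ZMod d))} :
            Set (ZMod d × ZMod d)), p ∈ Cset d 0 0) ∧
    ∀ i j : ℕ, i ∣ d → i ≠ 0 → j ≤ d / i - 1 →
      ∃ p ∈ ({((0 : ZMod d), ((d / 2 : ℕ) : ZMod d)),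
              (((d / 2 : ℕ) : ZMod d), (0 : ZMod d)),
              (((d / 2 : ℕ) : ZMod d), ((d / 2 : ℕ) : ZMod d))} :
             Set (ZMod d × ZMod d)), p ∈ Cset d i j := by
  
  constructor
  · refine ⟨((0 : ZMod d), ((d / 2 : ℕ) : ZMod d)), Set.mem_insert _ _, ?_, 0, ?_⟩ <;> simp
  · intro i j hi hi0 hj
    by_cases h2i : 2 ∣ i
    · -- i even: (0, d/2) works
      refine ⟨((0 : ZMod d), ((d / 2 : ℕ) : ZMod d)), Set.mem_insert _ _, ?_, 0, by simp⟩
      simp [mul_half_even d i he h2i]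
    · -- i odd, so i ∣ d/2
      have hodd : Odd i := Nat.odd_iff.mpr (Nat.two_dvd_ne_zero.mp h2i)
      obtain ⟨m, hm⟩ := hi
      have h2m : 2 ∣ m := by
        rcases (Nat.Prime.dvd_mul Nat.prime_two).mp (hm ▸ he) with h | h
        · exact absurd h h2i
        · exact h
      obtain ⟨m', hm'⟩ := h2m
      have hd2 : d = 2 * (i * m') := by rw [hm, hm']; ring
      have hhalf : d / 2 = i * m' := by omega
      have hk : ((d / 2 : ℕ) : ZMod d) = (i : ZMod d) * ((m' : ℕ) : ZMod d) := by
        rw [hhalf]; push_cast; ring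
      by_cases h2j : 2 ∣ j
      · -- (d/2, 0)
        refine ⟨(((d / 2 : ℕ) : ZMod d), (0 : ZMod d)),
          Set.mem_insert_of_mem _ (Set.mem_insert _ _), ?_, ((m' : ℕ) : ZMod d), hk⟩
        simp [mul_half_even d j he h2j]
      · -- (d/2, d/2)
        refine ⟨(((d / 2 : ℕ) : ZMod d), ((d / 2 : ℕ) : ZMod d)),
          Set.mem_insert_of_mem _ (Set.mem_insert_of_mem _ rfl), ?_, ((m' : ℕ) : ZMod d), hk⟩
        show (i : ZMod d) * _ - (j : ZMod d) * _ = 0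
        rw [mul_half_odd d i he h2i, mul_half_odd d j he h2j, sub_self]
end

section
/- There is no unit vector |α⟩ = Σ_{j=0}^{5} α_j |j⟩ in ℂ^6 such that ⟨α| Z^i |α⟩ = 0 for i = 1,2,3,4,5 and ⟨α| X^3 Z^i |α⟩ = 0 for i = 0,1,3,5, where ω = e^{2πi/6}, X|j⟩ = |j+1 mod 6⟩, Z|j⟩ = ω^j|j⟩. -/
open Matrix

/-- The primitive `d`-th root of unity `ω = e^{2πi/d}`. -/
noncomputable def omega (d : ℕ) : ℂ := Complex.exp (2 * Real.pi * Complex.I / d)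

/-- The generalized Pauli shift matrix `X` on `ℂ^d`: `X|j⟩ = |j+1 mod d⟩`. -/
def Xmat (d : ℕ) : Matrix (Fin d) (Fin d) ℂ :=
  Matrix.of fun i j => if (i : ℕ) = ((j : ℕ) + 1) % d then 1 else 0

/-- The generalized Pauli clock matrix `Z` on `ℂ^d`: `Z|j⟩ = ω^j|j⟩`. -/
noncomputable def Zmat (d : ℕ) : Matrix (Fin d) (Fin d) ℂ :=
  Matrix.diagonal fun j => omega d ^ (j : ℕ)

private lemma finv0 : ((0:Fin 6):ℕ) = 0 := rfl
private lemma finv1 : ((1:Fin 6):ℕ) = 1 := rfl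
private lemma finv2 : ((2:Fin 6):ℕ) = 2 := rfl
private lemma finv3 : ((3:Fin 6):ℕ) = 3 := rfl
private lemma finv4 : ((4:Fin 6):ℕ) = 4 := rfl
private lemma finv5 : ((5:Fin 6):ℕ) = 5 := rfl

private lemma X3 :
    Xmat 6 ^ 3 = Matrix.of (fun i j : Fin 6 => if (i : ℕ) = ((j : ℕ) + 3) % 6 then 1 else 0) := by
  rw [pow_succ, pow_succ, pow_one]
  ext i j
  fin_cases i <;> fin_cases j <;>
    simp only [Matrix.mul_apply, Xmat, Matrix.of_apply, Fin.sum_univ_six,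
      finv0, finv1, finv2, finv3, finv4, finv5] <;> norm_num

private lemma omega_val : omega 6 = 1/2 + (Real.sqrt 3 : ℂ)/2 * Complex.I := by
  have h : (2 * (Real.pi:ℂ) * Complex.I / ((6:ℕ):ℂ)) = ((Real.pi/3 : ℝ) : ℂ) * Complex.I := by
    push_cast; ring
  rw [omega, h, Complex.exp_mul_I, ← Complex.ofReal_cos, ← Complex.ofReal_sin,
    Real.cos_pi_div_three, Real.sin_pi_div_three]
  push_cast
  ring

private lemma omega_sq : omega 6 ^ 2 = omega 6 - 1 := by
  have h3 : ((Real.sqrt 3 : ℝ) : ℂ)^2 = 3 := by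
    rw [← Complex.ofReal_pow, Real.sq_sqrt (by norm_num : (3:ℝ) ≥ 0)]
    norm_num
  rw [omega_val]
  linear_combination (Complex.I^2/4) * h3 + (3/4) * Complex.I_sq

/-- There is no unit vector `|α⟩` in `ℂ^6` with `⟨α|Z^i|α⟩ = 0` for
`i = 1,2,3,4,5` and `⟨α|X³Z^i|α⟩ = 0` for `i = 0,1,3,5`.  (Hence the 4-GBS set
`{(0,0),(0,1),(0,3),(3,0)}` in `ℂ^6 ⊗ ℂ^6` is one-way LOCC indistinguishable.) -/
theorem no_unit_vector_S2 :
    ¬ ∃ α : Fin 6 → ℂ, star α ⬝ᵥ α = 1 ∧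
      (∀ i ∈ ({1, 2, 3, 4, 5} : Finset ℕ), star α ⬝ᵥ (Zmat 6 ^ i).mulVec α = 0) ∧
      (∀ i ∈ ({0, 1, 3, 5} : Finset ℕ),
        star α ⬝ᵥ (Xmat 6 ^ 3 * Zmat 6 ^ i).mulVec α = 0) := by
  rintro ⟨α, hN, hZ, hX⟩
  have h1 := hZ 1 (by decide)
  have h2 := hZ 2 (by decide)
  have h3 := hZ 3 (by decide)
  have h4 := hZ 4 (by decide)
  have h5 := hZ 5 (by decide)
  have hx0 := hX 0 (by decide)
  have hx1 := hX 1 (by decide)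
  have hx3 := hX 3 (by decide)
  have hx5 := hX 5 (by decide)
  rw [X3] at hx0 hx1 hx3 hx5
  simp only [Zmat, Matrix.diagonal_pow, Matrix.mulVec, dotProduct,
    Matrix.diagonal_apply, Matrix.of_apply, Fin.sum_univ_six, Pi.star_apply] at hN h1 h2 h3 h4 h5 hx0 hx1 hx3 hx5
  norm_num [finv0, finv1, finv2, finv3, finv4, finv5, Fin.ext_iff] at hN h1 h2 h3 h4 h5 hx0 hx1 hx3 hx5
  have hw := omega_sq
  set w := omega 6 with hwdef
  set a0 := α 0 with ha0
  set a1 := α 1 with ha1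
  set a2 := α 2 with ha2
  set a3 := α 3 with ha3
  set a4 := α 4 with ha4
  set a5 := α 5 with ha5
  set c0 := (starRingEnd ℂ) (α 0) with hc0
  set c1 := (starRingEnd ℂ) (α 1) with hc1
  set c2 := (starRingEnd ℂ) (α 2) with hc2
  set c3 := (starRingEnd ℂ) (α 3) with hc3
  set c4 := (starRingEnd ℂ) (α 4) with hc4
  set c5 := (starRingEnd ℂ) (α 5) with hc5
  have hn0 : c0*a0 = 1/6 := by
    linear_combination ((1/6)) * hN + ((1/6)) * h1 + ((1/6)) * h2 + ((1/6)) * h3 + ((1/6)) * h4 + ((1/6)) * h5 + ((-1/6) + (-1/3)*w + (-1/3)*w^2 + (-1/6)*w^3) * (c1*a1) * hw + ((-1/6) + (-1/6)*w + (-1/6)*w^2 + (-1/6)*w^6 + (-1/6)*w^7 + (-1/6)*w^8) * (c2*a2) * hw + ((-1/6) + (-1/6)*w + (-1/6)*w^6 + (-1/6)*w^7 + (-1/6)*w^12 + (-1/6)*w^13) * (c3*a3) * hw + ((-1/6) + (-1/6)*w + (1/6)*w^3 + (-1/6)*w^5 + (-1/6)*w^6 + (-1/6)*w^12 + (-1/6)*w^13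 + (1/6)*w^15 + (-1/6)*w^17 + (-1/6)*w^18) * (c4*a4) * hw + ((-1/6) + (-1/6)*w + (1/6)*w^3 + (1/6)*w^4 + (-1/6)*w^5 + (-1/3)*w^6 + (-1/6)*w^7 + (1/6)*w^8 + (1/3)*w^9 + (-1/3)*w^11 + (-1/3)*w^12 + (1/3)*w^14 + (1/6)*w^15 + (-1/6)*w^16 + (-1/3)*w^17 + (-1/6)*w^18 + (1/6)*w^19 + (1/6)*w^20 + (-1/6)*w^22 + (-1/6)*w^23) * (c5*a5) * hw
  have hn1 : c1*a1 = 1/6 := by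
    linear_combination ((1/6)) * hN + ((1/6) + (-1/6)*w) * h1 + ((-1/6)*w) * h2 + ((-1/6)) * h3 + ((-1/6) + (1/6)*w) * h4 + ((1/6)*w) * h5 + ((5/6) + (2/3)*w + (-1/3)*w^3 + (-1/6)*w^4) * (c1*a1) * hw + ((-1/6) + (-1/6)*w + (-1/6)*w^2 + (1/6)*w^3 + (1/3)*w^4 + (1/3)*w^5 + (1/6)*w^6 + (-1/6)*w^7 + (-1/6)*w^8 + (-1/6)*w^9) * (c2*a2) * hw + ((-1/6) + (-1/6)*w + (1/6)*w^4 + (1/6)*w^5 + (1/6)*w^9 + (1/6)*w^10 + (-1/6)*w^13 + (-1/6)*w^14) * (c3*a3) * hw + ((-1/6) + (-1/6)*w + (1/6)*w^3 + (1/6)*w^9 + (1/6)*w^10 + (1/6)*w^16 + (-1/6)*w^18 + (-1/6)*w^19) * (c4*a4) * hw + ((-1/6) + (-1/6)*w + (1/6)*w^3 + (1/6)*w^4 + (-1/6)*w^5 + (-1/6)*w^6 + (1/6)*w^8 + (1/6)*w^9 + (1/6)*w^15 + (1/6)*w^16 + (-1/6)*w^18 + (-1/6)*w^19 + (1/6)*w^20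 + (1/6)*w^21 + (-1/6)*w^23 + (-1/6)*w^24) * (c5*a5) * hw
  have hn2 : c2*a2 = 1/6 := by
    linear_combination ((1/6)) * hN + ((-1/6)*w) * h1 + ((-1/6) + (1/6)*w) * h2 + ((1/6)) * h3 + ((-1/6)*w) * h4 + ((-1/6) + (1/6)*w) * h5 + ((-1/6) + (-1/6)*w + (1/3)*w^2 + (1/6)*w^3 + (-1/6)*w^4) * (c1*a1) * hw + ((5/6) + (5/6)*w + (-2/3)*w^3 + (-1/2)*w^4 + (1/3)*w^6 + (1/3)*w^7 + (-1/6)*w^9) * (c2*a2) * hw + ((-1/6) + (-1/6)*w + (1/6)*w^3 + (1/3)*w^4 + (1/6)*w^5 + (-1/3)*w^7 + (-1/3)*w^8 + (-1/6)*w^9 + (1/6)*w^10 + (1/3)*w^11 + (1/6)*w^12 + (-1/6)*w^14) * (c3*a3) * hw + ((-1/6) + (-1/6)*w + (1/6)*w^3 + (1/6)*w^4 + (1/6)*w^5 + (-1/6)*w^7 + (-1/6)*w^12 + (-1/6)*w^13 + (1/6)*w^15 + (1/6)*w^16 + (1/6)*w^17 + (-1/6)*w^19) * (c4*a4) * hw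 + ((-1/6) + (-1/6)*w + (1/6)*w^3 + (1/6)*w^4 + (1/6)*w^10 + (-1/6)*w^12 + (-1/6)*w^13 + (1/6)*w^21 + (1/6)*w^22 + (-1/6)*w^24) * (c5*a5) * hw
  have hn3 : c3*a3 = 1/6 := by
    linear_combination ((1/6)) * hN + ((-1/6)) * h1 + ((1/6)) * h2 + ((-1/6)) * h3 + ((1/6)) * h4 + ((-1/6)) * h5 + ((-1/6) + (1/6)*w^3) * (c1*a1) * hw + ((-1/6) + (-1/6)*w + (1/6)*w^2 + (1/3)*w^3 + (-1/3)*w^5 + (-1/6)*w^6 + (1/6)*w^7 + (1/6)*w^8) * (c2*a2) * hw + ((5/6) + (5/6)*w + (-2/3)*w^3 + (-2/3)*w^4 + (1/2)*w^6 + (1/2)*w^7 + (-1/3)*w^9 + (-1/3)*w^10 + (1/6)*w^12 + (1/6)*w^13) * (c3*a3) * hw + ((-1/6) + (-1/6)*w + (1/6)*w^3 + (1/3)*w^4 + (1/6)*w^5 + (-1/6)*w^6 + (-1/3)*w^7 + (-1/3)*w^8 + (1/3)*w^10 + (1/3)*w^11 + (1/6)*w^12 + (-1/6)*w^13 + (-1/3)*w^14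 + (-1/6)*w^15 + (1/6)*w^17 + (1/6)*w^18) * (c4*a4) * hw + ((-1/6) + (-1/6)*w + (1/6)*w^3 + (1/6)*w^4 + (1/6)*w^5 + (-1/6)*w^7 + (-1/6)*w^8 + (1/6)*w^15 + (1/6)*w^16 + (-1/6)*w^18 + (-1/6)*w^19 + (-1/6)*w^20 + (1/6)*w^22 + (1/6)*w^23) * (c5*a5) * hw
  have hn4 : c4*a4 = 1/6 := by
    linear_combination ((1/6)) * hN + ((-1/6) + (1/6)*w) * h1 + ((-1/6)*w) * h2 + ((1/6)) * h3 + ((-1/6) + (1/6)*w) * h4 + ((-1/6)*w) * h5 + ((-1/6) + (1/6)*w^4) * (c1*a1) * hw + ((-1/6) + (-1/6)*w + (1/6)*w^2 + (1/6)*w^3 + (-1/6)*w^6 + (-1/6)*w^7 + (1/6)*w^8 + (1/6)*w^9) * (c2*a2) * hw + ((-1/6) + (-1/6)*w + (1/3)*w^3 + (1/6)*w^4 + (-1/6)*w^5 + (-1/3)*w^6 + (1/3)*w^8 + (1/6)*w^9 + (-1/6)*w^10 + (-1/3)*w^11 + (1/6)*w^13 + (1/6)*w^14) * (c3*a3) *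 hw + ((5/6) + (5/6)*w + (-5/6)*w^3 + (-2/3)*w^4 + (2/3)*w^6 + (2/3)*w^7 + (-1/2)*w^9 + (-1/2)*w^10 + (1/3)*w^12 + (1/3)*w^13 + (-1/3)*w^15 + (-1/6)*w^16 + (1/6)*w^18 + (1/6)*w^19) * (c4*a4) * hw + ((-1/6) + (-1/6)*w + (1/6)*w^3 + (1/6)*w^4 + (1/6)*w^5 + (-1/6)*w^6 + (-1/3)*w^7 + (-1/6)*w^8 + (1/6)*w^9 + (1/3)*w^10 + (1/3)*w^11 + (-1/3)*w^13 + (-1/3)*w^14 + (-1/6)*w^15 + (1/6)*w^16 + (1/3)*w^17 + (1/6)*w^18 + (-1/6)*w^19 + (-1/6)*w^20 + (-1/6)*w^21 + (1/6)*w^23 + (1/6)*w^24) * (c5*a5) * hw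
  have hn5 : c5*a5 = 1/6 := by
    linear_combination ((1/6)) * hN + ((1/6)*w) * h1 + ((-1/6) + (1/6)*w) * h2 + ((-1/6)) * h3 + ((-1/6)*w) * h4 + ((1/6) + (-1/6)*w) * h5 + ((-1/6) + (-1/6)*w + (1/6)*w^3 + (1/6)*w^4) * (c1*a1) * hw + ((-1/6) + (-1/6)*w + (1/6)*w^4 + (1/6)*w^9) * (c2*a2) * hw + ((-1/6) + (-1/6)*w + (1/6)*w^3 + (-1/6)*w^5 + (1/6)*w^9 + (1/6)*w^10 + (-1/6)*w^12 + (1/6)*w^14) * (c3*a3) * hw + ((-1/6) + (-1/6)*w + (1/6)*w^3 + (1/6)*w^4 + (-1/6)*w^5 + (-1/3)*w^6 + (-1/6)*w^7 + (1/3)*w^8 + (1/3)*w^9 + (-1/3)*w^11 + (-1/6)*w^12 + (1/6)*w^13 + (1/3)*w^14 + (1/6)*w^15 + (-1/6)*w^16 + (-1/6)*w^17 + (1/6)*w^19) * (c4*a4) * hw + ((5/6) + (5/6)*w + (-5/6)*w^3 + (-5/6)*w^4 + (2/3)*w^6 + (2/3)*w^7 + (-2/3)*w^9 + (-1/2)*w^10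 + (1/2)*w^12 + (1/2)*w^13 + (-1/3)*w^15 + (-1/3)*w^16 + (1/3)*w^18 + (1/3)*w^19 + (-1/6)*w^21 + (-1/6)*w^22 + (1/6)*w^24) * (c5*a5) * hw
  have hb0 : c3*a0 = c0*a3 := by
    linear_combination ((1/3)) * hx1 + ((1/3)) * hx3 + ((1/3)) * hx5 + ((-1/3)*w + (-1/3)*w^2 + (-1/3)*w^3) * (c4*a1) * hw + ((-1/3)*w^2 + (-1/3)*w^3 + (1/3)*w^5 + (-1/3)*w^7 + (-1/3)*w^8) * (c5*a2) * hw + ((-1) + (-1)*w + (2/3)*w^3 + (2/3)*w^4 + (-2/3)*w^6 + (-2/3)*w^7 + (1/3)*w^9 + (1/3)*w^10 + (-1/3)*w^12 + (-1/3)*w^13) * (c0*a3) * hw + ((-1/3)*w^4 + (-1/3)*w^5 + (1/3)*w^7 + (1/3)*w^8 + (-1/3)*w^10 + (-1/3)*w^11 + (-1/3)*w^12 + (1/3)*w^14 + (1/3)*w^15 + (-1/3)*w^17 + (-1/3)*w^18) * (c1*a4) * hw + ((-1/3)*w^5 + (-1/3)*w^6 + (1/3)*w^8 + (1/3)*w^9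 + (-1/3)*w^11 + (-1/3)*w^12 + (1/3)*w^14 + (-1/3)*w^16 + (-1/3)*w^17 + (1/3)*w^19 + (1/3)*w^20 + (-1/3)*w^22 + (-1/3)*w^23) * (c2*a5) * hw
  have hb1 : c4*a1 = c1*a4 := by
    linear_combination ((1/3) + (-1/3)*w) * hx1 + ((-1/3)) * hx3 + ((1/3)*w) * hx5 + ((1) + (2/3)*w + (-1/3)*w^3 + (-1/3)*w^4) * (c4*a1) * hw + ((-1/3)*w^2 + (1/3)*w^4 + (1/3)*w^5 + (1/3)*w^6 + (-1/3)*w^8 + (-1/3)*w^9) * (c5*a2) * hw + ((-1/3)*w^3 + (1/3)*w^5 + (1/3)*w^6 + (-1/3)*w^8 + (1/3)*w^10 + (1/3)*w^11 + (-1/3)*w^13 + (-1/3)*w^14) * (c0*a3) * hw + ((-1) + (-1)*w + (1)*w^3 + (2/3)*w^4 + (-2/3)*w^6 + (-2/3)*w^7 + (2/3)*w^9 + (2/3)*w^10 + (-1/3)*w^12 + (-1/3)*w^13 + (1/3)*w^15 + (1/3)*w^16 + (-1/3)*w^18 + (-1/3)*w^19) * (c1*a4) * hw + ((-1/3)*w^5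 + (1/3)*w^7 + (1/3)*w^8 + (-1/3)*w^10 + (-1/3)*w^11 + (1/3)*w^13 + (1/3)*w^14 + (1/3)*w^15 + (-1/3)*w^17 + (-1/3)*w^18 + (1/3)*w^20 + (1/3)*w^21 + (-1/3)*w^23 + (-1/3)*w^24) * (c2*a5) * hw
  have hb2 : c5*a2 = c2*a5 := by
    linear_combination ((-1/3)*w) * hx1 + ((1/3)) * hx3 + ((-1/3) + (1/3)*w) * hx5 + ((1/3)*w^2 + (-1/3)*w^4) * (c4*a1) * hw + ((1) + (1)*w + (-2/3)*w^3 + (-2/3)*w^4 + (1/3)*w^6 + (1/3)*w^7 + (-1/3)*w^9) * (c5*a2) * hw + ((1/3)*w^4 + (1/3)*w^5 + (-1/3)*w^7 + (-1/3)*w^8 + (-1/3)*w^9 + (1/3)*w^11 + (1/3)*w^12 + (-1/3)*w^14) * (c0*a3) * hw + ((1/3)*w^5 + (1/3)*w^6 + (-1/3)*w^8 + (-1/3)*w^9 + (1/3)*w^11 + (-1/3)*w^13 + (-1/3)*w^14 + (1/3)*w^16 + (1/3)*w^17 + (-1/3)*w^19) * (c1*a4) * hw + ((-1) + (-1)*w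 + (1)*w^3 + (1)*w^4 + (-2/3)*w^6 + (-2/3)*w^7 + (2/3)*w^9 + (2/3)*w^10 + (-2/3)*w^12 + (-2/3)*w^13 + (1/3)*w^15 + (1/3)*w^16 + (-1/3)*w^18 + (-1/3)*w^19 + (1/3)*w^21 + (1/3)*w^22 + (-1/3)*w^24) * (c2*a5) * hw
  have hsum : c3*a0 + c4*a1 + c5*a2 = 0 := by
    linear_combination hx0/2 + hb0/2 + hb1/2 + hb2/2
  have hq0 : (c3*a0)^2 = 1/36 := by
    linear_combination (c3*a0)*hb0 + (c3*a3)*hn0 + (1/6)*hn3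
  have hq1 : (c4*a1)^2 = 1/36 := by
    linear_combination (c4*a1)*hb1 + (c4*a4)*hn1 + (1/6)*hn4
  have hq2 : (c5*a2)^2 = 1/36 := by
    linear_combination (c5*a2)*hb2 + (c5*a5)*hn2 + (1/6)*hn5
  have h72 : c4*a1*(c5*a2) = -1/72 := by
    linear_combination ((c4*a1 + c5*a2 - c3*a0)/2)*hsum + hq0/2 - hq1/2 - hq2/2
  have hfin : (1:ℂ)/1296 = 1/5184 := by
    linear_combination (-(c5*a2)^2)*hq1 - (1/36)*hq2 + (c4*a1*(c5*a2) - 1/72)*h72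
  norm_num at hfin
end

section
/- There is no unit vector |α⟩ = Σ_{j=0}^{5} α_j |j⟩ in ℂ^6 such that ⟨α| Z^i |α⟩ = 0 for i = 2,4 and ⟨α| X^2 Z^i |α⟩ = 0 for i = 0,2,4 and ⟨α| X^4 Z^i |α⟩ = 0 for i = 0,2,4. -/
open Matrix

private lemma Xstep (v : Fin 6 → ℂ) : (Xmat 6).mulVec v = ![v 5, v 0, v 1, v 2, v 3, v 4] := by
  funext i
  fin_cases i <;>
    simp [Xmat, Matrix.mulVec, dotProduct, Fin.sum_univ_six,
      show ((0:Fin 6):ℕ)=0 from rfl, show ((1:Fin 6):ℕ)=1 from rfl,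
      show ((2:Fin 6):ℕ)=2 from rfl, show ((3:Fin 6):ℕ)=3 from rfl,
      show ((4:Fin 6):ℕ)=4 from rfl, show ((5:Fin 6):ℕ)=5 from rfl] <;> rfl

private lemma Zpow (i : ℕ) (v : Fin 6 → ℂ) :
    (Zmat 6 ^ i).mulVec v = fun j : Fin 6 => (omega 6 ^ (j : ℕ)) ^ i * v j := by
  funext j
  simp [Zmat, Matrix.diagonal_pow, Matrix.mulVec_diagonal]

private lemma X2v (v : Fin 6 → ℂ) : (Xmat 6 ^ 2).mulVec v = ![v 4, v 5, v 0, v 1, v 2, v 3] := by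
  rw [pow_two, ← Matrix.mulVec_mulVec, Xstep, Xstep]
  funext i; fin_cases i <;> rfl

private lemma X4v (v : Fin 6 → ℂ) : (Xmat 6 ^ 4).mulVec v = ![v 2, v 3, v 4, v 5, v 0, v 1] := by
  rw [show Xmat 6 ^ 4 = Xmat 6 ^ 2 * Xmat 6 ^ 2 by rw [← pow_add], ← Matrix.mulVec_mulVec,
    X2v, X2v]
  funext i; fin_cases i <;> rfl

private lemma vec6_at5 (x0 x1 x2 x3 x4 x5 : ℂ) :
    (![x0, x1, x2, x3, x4, x5] : Fin 6 → ℂ) 5 = x5 := rfl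

private lemma omega6_pow_six : omega 6 ^ 6 = 1 := by
  rw [omega, ← Complex.exp_nat_mul]
  rw [show ((6:ℕ):ℂ) * (2 * Real.pi * Complex.I / (6:ℕ)) = 2 * Real.pi * Complex.I by
    push_cast; ring]
  exact Complex.exp_two_pi_mul_I

private lemma omega6_sq_ne_one : omega 6 ^ 2 ≠ 1 := by
  rw [omega, ← Complex.exp_nat_mul]
  intro h
  rw [Complex.exp_eq_one_iff] at h
  obtain ⟨n, hn⟩ := h
  have h2 : (2 * (Real.pi : ℂ) * Complex.I) * ((1:ℂ)/3 - n) = 0 := by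
    push_cast at hn ⊢
    linear_combination hn
  have hne : (2 * (Real.pi : ℂ) * Complex.I) ≠ 0 := by
    apply mul_ne_zero (mul_ne_zero (by norm_num) _) Complex.I_ne_zero
    exact_mod_cast Real.pi_ne_zero
  have h3 : ((1:ℂ)/3 - n) = 0 := by
    rcases mul_eq_zero.mp h2 with h | h
    · exact absurd h hne
    · exact h
  have h4 : ((3 * n : ℤ) : ℂ) = ((1 : ℤ) : ℂ) := by push_cast; linear_combination -3 * h3
  have h5 : (3 * n : ℤ) = 1 := Int.cast_injective h4
  omega

private lemma omega6_cubic : omega 6 ^ 4 + omega 6 ^ 2 + 1 = 0 := by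
  have h0 : (omega 6 ^ 2 - 1) * (omega 6 ^ 4 + omega 6 ^ 2 + 1) = 0 := by
    linear_combination omega6_pow_six
  rcases mul_eq_zero.mp h0 with h | h
  · exact absurd (by linear_combination h) omega6_sq_ne_one
  · exact h

/-- There is no unit vector `|α⟩` in `ℂ^6` with `⟨α|Z^i|α⟩ = 0` for `i = 2,4`,
`⟨α|X²Z^i|α⟩ = 0` for `i = 0,2,4`, and `⟨α|X⁴Z^i|α⟩ = 0` for `i = 0,2,4`.
(Hence `{(0,0),(0,2),(0,4),(2,0)}` is one-way LOCC indistinguishable.) -/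
theorem no_unit_vector_S3 :
    ¬ ∃ α : Fin 6 → ℂ, star α ⬝ᵥ α = 1 ∧
      (∀ i ∈ ({2, 4} : Finset ℕ), star α ⬝ᵥ (Zmat 6 ^ i).mulVec α = 0) ∧
      (∀ i ∈ ({0, 2, 4} : Finset ℕ),
        star α ⬝ᵥ (Xmat 6 ^ 2 * Zmat 6 ^ i).mulVec α = 0) ∧
      (∀ i ∈ ({0, 2, 4} : Finset ℕ),
        star α ⬝ᵥ (Xmat 6 ^ 4 * Zmat 6 ^ i).mulVec α = 0) := by
  rintro ⟨α, hN, hZ, hA, hB⟩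
  have hw : omega 6 ^ 4 + omega 6 ^ 2 + 1 = 0 := omega6_cubic
  have hZ2 := hZ 2 (by decide)
  have hZ4 := hZ 4 (by decide)
  have hA0 := hA 0 (by decide)
  have hA2 := hA 2 (by decide)
  have hA4 := hA 4 (by decide)
  have hB0 := hB 0 (by decide)
  have hB2 := hB 2 (by decide)
  have hB4 := hB 4 (by decide)
  rw [Zpow] at hZ2 hZ4
  rw [← Matrix.mulVec_mulVec, Zpow, X2v] at hA0 hA2 hA4
  rw [← Matrix.mulVec_mulVec, Zpow, X4v] at hB0 hB2 hB4
  simp only [dotProduct, Fin.sum_univ_six, Pi.star_apply, Complex.star_def,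
      Matrix.cons_val_zero, Matrix.cons_val_one, Matrix.head_cons, Matrix.cons_val_two,
      Matrix.tail_cons, Matrix.cons_val_three, Matrix.cons_val_four, vec6_at5,
      show ((0:Fin 6):ℕ)=0 from rfl, show ((1:Fin 6):ℕ)=1 from rfl,
      show ((2:Fin 6):ℕ)=2 from rfl, show ((3:Fin 6):ℕ)=3 from rfl,
      show ((4:Fin 6):ℕ)=4 from rfl, show ((5:Fin 6):ℕ)=5 from rfl,
      pow_zero, pow_one, one_mul] at hN hZ2 hZ4 hA0 hA2 hA4 hB0 hB2 hB4
  have n1 : (starRingEnd ℂ) (α 0) * α 0 + (starRingEnd ℂ) (α 3) * α 3 = 1/3 := by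
    linear_combination ((1/3 : ℂ)) * hN + ((1/3 : ℂ)) * hZ2 + ((1/3 : ℂ)) * hZ4 - (((1/3 : ℂ)) * ((starRingEnd ℂ) (α 1) * α 1) + ((1/3 : ℂ) + (-1/3 : ℂ) * omega 6 ^ 2 + (1/3 : ℂ) * omega 6 ^ 4) * ((starRingEnd ℂ) (α 2) * α 2) + ((-2/3 : ℂ) + (2/3 : ℂ) * omega 6 ^ 2 + (-1/3 : ℂ) * omega 6 ^ 6 + (1/3 : ℂ) * omega 6 ^ 8) * ((starRingEnd ℂ) (α 3) * α 3) + ((1/3 : ℂ) + (-1/3 : ℂ) * omega 6 ^ 2 + (1/3 : ℂ) * omega 6 ^ 6 + (-1/3 : ℂ) * omega 6 ^ 10 + (1/3 : ℂ) * omega 6 ^ 12) * ((starRingEnd ℂ) (α 4) * α 4) + ((1/3 : ℂ) + (-1/3 : ℂ) * omega 6 ^ 2 + (1/3 : ℂ) * omega 6 ^ 6 + (-1/3 : ℂ) * omega 6 ^ 8 + (1/3 : ℂ) * omega 6 ^ 10 + (-1/3 : ℂ) * omega 6 ^ 14 + (1/3 : ℂ) * omega 6 ^ 16) * ((starRingEnd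 ℂ) (α 5) * α 5)) * hw
  have n2 : (starRingEnd ℂ) (α 1) * α 1 + (starRingEnd ℂ) (α 4) * α 4 = 1/3 := by
    linear_combination ((1/3 : ℂ)) * hN + ((1/3 : ℂ) * omega 6 ^ 4) * hZ2 + ((1/3 : ℂ) * omega 6 ^ 2) * hZ4 - (((1/3 : ℂ)) * ((starRingEnd ℂ) (α 0) * α 0) + ((-2/3 : ℂ) + (2/3 : ℂ) * omega 6 ^ 2) * ((starRingEnd ℂ) (α 1) * α 1) + ((1/3 : ℂ) + (-1/3 : ℂ) * omega 6 ^ 2 + (1/3 : ℂ) * omega 6 ^ 6) * ((starRingEnd ℂ) (α 2) * α 2) + ((1/3 : ℂ) + (-1/3 : ℂ) * omega 6 ^ 2 + (1/3 : ℂ) * omega 6 ^ 6 + (-1/3 : ℂ) * omega 6 ^ 8 + (1/3 : ℂ) * omega 6 ^ 10) * ((starRingEnd ℂ) (α 3) * α 3) + ((-2/3 : ℂ) + (2/3 : ℂ) * omega 6 ^ 2 + (-2/3 : ℂ) * omega 6 ^ 6 + (2/3 : ℂ) * omega 6 ^ 8 + (-1/3 : ℂ) * omega 6 ^ 12 + (1/3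 : ℂ) * omega 6 ^ 14) * ((starRingEnd ℂ) (α 4) * α 4) + ((1/3 : ℂ) + (-1/3 : ℂ) * omega 6 ^ 2 + (1/3 : ℂ) * omega 6 ^ 6 + (-1/3 : ℂ) * omega 6 ^ 8 + (1/3 : ℂ) * omega 6 ^ 12 + (-1/3 : ℂ) * omega 6 ^ 16 + (1/3 : ℂ) * omega 6 ^ 18) * ((starRingEnd ℂ) (α 5) * α 5)) * hw
  have n3 : (starRingEnd ℂ) (α 2) * α 2 + (starRingEnd ℂ) (α 5) * α 5 = 1/3 := by
    linear_combination ((1/3 : ℂ)) * hN + ((1/3 : ℂ) * omega 6 ^ 2) * hZ2 + ((1/3 : ℂ) * omega 6 ^ 4) * hZ4 - (((1/3 : ℂ)) * ((starRingEnd ℂ) (α 0) * α 0) + ((1/3 : ℂ) + (-1/3 : ℂ) * omega 6 ^ 2 + (1/3 : ℂ) * omega 6 ^ 4) * ((starRingEnd ℂ) (α 1) * α 1) + ((-2/3 : ℂ) + (2/3 : ℂ) * omega 6 ^ 2 + (-1/3 : ℂ) * omega 6 ^ 6 + (1/3 : ℂ) * omega 6 ^ 8) * ((starRingEnd ℂ)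 (α 2) * α 2) + ((1/3 : ℂ) + (-1/3 : ℂ) * omega 6 ^ 2 + (1/3 : ℂ) * omega 6 ^ 6 + (-1/3 : ℂ) * omega 6 ^ 10 + (1/3 : ℂ) * omega 6 ^ 12) * ((starRingEnd ℂ) (α 3) * α 3) + ((1/3 : ℂ) + (-1/3 : ℂ) * omega 6 ^ 2 + (1/3 : ℂ) * omega 6 ^ 6 + (-1/3 : ℂ) * omega 6 ^ 8 + (1/3 : ℂ) * omega 6 ^ 10 + (-1/3 : ℂ) * omega 6 ^ 14 + (1/3 : ℂ) * omega 6 ^ 16) * ((starRingEnd ℂ) (α 4) * α 4) + ((-2/3 : ℂ) + (2/3 : ℂ) * omega 6 ^ 2 + (-2/3 : ℂ) * omega 6 ^ 6 + (2/3 : ℂ) * omega 6 ^ 8 + (-1/3 : ℂ) * omega 6 ^ 12 + (1/3 : ℂ) * omega 6 ^ 14 + (-1/3 : ℂ) * omega 6 ^ 18 + (1/3 : ℂ) * omega 6 ^ 20) * ((starRingEnd ℂ) (α 5) * α 5)) * hw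
  have e1 : (starRingEnd ℂ) (α 2) * α 0 + (starRingEnd ℂ) (α 5) * α 3 = 0 := by
    linear_combination ((1/3 : ℂ)) * hA0 + ((1/3 : ℂ)) * hA2 + ((1/3 : ℂ)) * hA4 - (((1/3 : ℂ) + (-1/3 : ℂ) * omega 6 ^ 2 + (1/3 : ℂ) * omega 6 ^ 6 + (-1/3 : ℂ) * omega 6 ^ 10 + (1/3 : ℂ) * omega 6 ^ 12) * ((starRingEnd ℂ) (α 0) * α 4) + ((1/3 : ℂ) + (-1/3 : ℂ) * omega 6 ^ 2 + (1/3 : ℂ) * omega 6 ^ 6 + (-1/3 : ℂ) * omega 6 ^ 8 + (1/3 : ℂ) * omega 6 ^ 10 + (-1/3 : ℂ) * omega 6 ^ 14 + (1/3 : ℂ) * omega 6 ^ 16) * ((starRingEnd ℂ) (α 1) * α 5) + ((1/3 : ℂ)) * ((starRingEnd ℂ) (α 3) * α 1) + ((1/3 : ℂ) + (-1/3 : ℂ) * omega 6 ^ 2 + (1/3 : ℂ) * omega 6 ^ 4) * ((starRingEnd ℂ) (α 4) * α 2) + ((-2/3 : ℂ) + (2/3 : ℂ) * omega 6 ^ 2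 + (-1/3 : ℂ) * omega 6 ^ 6 + (1/3 : ℂ) * omega 6 ^ 8) * ((starRingEnd ℂ) (α 5) * α 3)) * hw
  have e2 : (starRingEnd ℂ) (α 0) * α 4 + (starRingEnd ℂ) (α 3) * α 1 = 0 := by
    linear_combination ((1/3 : ℂ)) * hA0 + ((1/3 : ℂ) * omega 6 ^ 4) * hA2 + ((1/3 : ℂ) * omega 6 ^ 2) * hA4 - (((-2/3 : ℂ) + (2/3 : ℂ) * omega 6 ^ 2 + (-2/3 : ℂ) * omega 6 ^ 6 + (2/3 : ℂ) * omega 6 ^ 8 + (-1/3 : ℂ) * omega 6 ^ 12 + (1/3 : ℂ) * omega 6 ^ 14) * ((starRingEnd ℂ) (α 0) * α 4) + ((1/3 : ℂ) + (-1/3 : ℂ) * omega 6 ^ 2 + (1/3 : ℂ) * omega 6 ^ 6 + (-1/3 : ℂ) * omega 6 ^ 8 + (1/3 : ℂ) * omega 6 ^ 12 + (-1/3 : ℂ) * omega 6 ^ 16 + (1/3 : ℂ) * omega 6 ^ 18) * ((starRingEnd ℂ) (α 1) * α 5) + ((1/3 : ℂ)) * ((starRingEnd ℂ) (α 2) * α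 0) + ((-2/3 : ℂ) + (2/3 : ℂ) * omega 6 ^ 2) * ((starRingEnd ℂ) (α 3) * α 1) + ((1/3 : ℂ) + (-1/3 : ℂ) * omega 6 ^ 2 + (1/3 : ℂ) * omega 6 ^ 6) * ((starRingEnd ℂ) (α 4) * α 2) + ((1/3 : ℂ) + (-1/3 : ℂ) * omega 6 ^ 2 + (1/3 : ℂ) * omega 6 ^ 6 + (-1/3 : ℂ) * omega 6 ^ 8 + (1/3 : ℂ) * omega 6 ^ 10) * ((starRingEnd ℂ) (α 5) * α 3)) * hw
  have e4 : (starRingEnd ℂ) (α 1) * α 3 + (starRingEnd ℂ) (α 4) * α 0 = 0 := by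
    linear_combination ((1/3 : ℂ)) * hB0 + ((1/3 : ℂ)) * hB2 + ((1/3 : ℂ)) * hB4 - (((1/3 : ℂ) + (-1/3 : ℂ) * omega 6 ^ 2 + (1/3 : ℂ) * omega 6 ^ 4) * ((starRingEnd ℂ) (α 0) * α 2) + ((-2/3 : ℂ) + (2/3 : ℂ) * omega 6 ^ 2 + (-1/3 : ℂ) * omega 6 ^ 6 + (1/3 : ℂ) * omega 6 ^ 8) * ((starRingEnd ℂ) (α 1) * α 3) + ((1/3 : ℂ) + (-1/3 : ℂ) * omega 6 ^ 2 + (1/3 : ℂ) * omega 6 ^ 6 + (-1/3 : ℂ) * omega 6 ^ 10 + (1/3 : ℂ) * omega 6 ^ 12) * ((starRingEnd ℂ) (α 2) * α 4) + ((1/3 : ℂ) + (-1/3 : ℂ) * omega 6 ^ 2 + (1/3 : ℂ) * omega 6 ^ 6 + (-1/3 : ℂ) * omega 6 ^ 8 + (1/3 : ℂ) * omega 6 ^ 10 + (-1/3 : ℂ) * omega 6 ^ 14 + (1/3 : ℂ) * omega 6 ^ 16) * ((starRingEnd ℂ) (α 3) * α 5) + ((1/3 : ℂ)) * ((starRingEnd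 ℂ) (α 5) * α 1)) * hw
  have e5 : (starRingEnd ℂ) (α 2) * α 4 + (starRingEnd ℂ) (α 5) * α 1 = 0 := by
    linear_combination ((1/3 : ℂ)) * hB0 + ((1/3 : ℂ) * omega 6 ^ 4) * hB2 + ((1/3 : ℂ) * omega 6 ^ 2) * hB4 - (((1/3 : ℂ) + (-1/3 : ℂ) * omega 6 ^ 2 + (1/3 : ℂ) * omega 6 ^ 6) * ((starRingEnd ℂ) (α 0) * α 2) + ((1/3 : ℂ) + (-1/3 : ℂ) * omega 6 ^ 2 + (1/3 : ℂ) * omega 6 ^ 6 + (-1/3 : ℂ) * omega 6 ^ 8 + (1/3 : ℂ) * omega 6 ^ 10) * ((starRingEnd ℂ) (α 1) * α 3) + ((-2/3 : ℂ) + (2/3 : ℂ) * omega 6 ^ 2 + (-2/3 : ℂ) * omega 6 ^ 6 + (2/3 : ℂ) * omega 6 ^ 8 + (-1/3 : ℂ) * omega 6 ^ 12 + (1/3 : ℂ) * omega 6 ^ 14) * ((starRingEnd ℂ) (α 2) * α 4) + ((1/3 : ℂ) + (-1/3 : ℂ) * omega 6 ^ 2 + (1/3 : ℂ) * omega 6 ^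 6 + (-1/3 : ℂ) * omega 6 ^ 8 + (1/3 : ℂ) * omega 6 ^ 12 + (-1/3 : ℂ) * omega 6 ^ 16 + (1/3 : ℂ) * omega 6 ^ 18) * ((starRingEnd ℂ) (α 3) * α 5) + ((1/3 : ℂ)) * ((starRingEnd ℂ) (α 4) * α 0) + ((-2/3 : ℂ) + (2/3 : ℂ) * omega 6 ^ 2) * ((starRingEnd ℂ) (α 5) * α 1)) * hw
  have e6 : (starRingEnd ℂ) (α 0) * α 2 + (starRingEnd ℂ) (α 3) * α 5 = 0 := by
    linear_combination ((1/3 : ℂ)) * hB0 + ((1/3 : ℂ) * omega 6 ^ 2) * hB2 + ((1/3 : ℂ) * omega 6 ^ 4) * hB4 - (((-2/3 : ℂ) + (2/3 : ℂ) * omega 6 ^ 2 + (-1/3 : ℂ) * omega 6 ^ 6 + (1/3 : ℂ) * omega 6 ^ 8) * ((starRingEnd ℂ) (α 0) * α 2) + ((1/3 : ℂ) + (-1/3 : ℂ) * omega 6 ^ 2 + (1/3 : ℂ) * omega 6 ^ 6 + (-1/3 : ℂ) * omega 6 ^ 10 + (1/3 : ℂ) * omega 6 ^ 12) * ((starRingEnd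 ℂ) (α 1) * α 3) + ((1/3 : ℂ) + (-1/3 : ℂ) * omega 6 ^ 2 + (1/3 : ℂ) * omega 6 ^ 6 + (-1/3 : ℂ) * omega 6 ^ 8 + (1/3 : ℂ) * omega 6 ^ 10 + (-1/3 : ℂ) * omega 6 ^ 14 + (1/3 : ℂ) * omega 6 ^ 16) * ((starRingEnd ℂ) (α 2) * α 4) + ((-2/3 : ℂ) + (2/3 : ℂ) * omega 6 ^ 2 + (-2/3 : ℂ) * omega 6 ^ 6 + (2/3 : ℂ) * omega 6 ^ 8 + (-1/3 : ℂ) * omega 6 ^ 12 + (1/3 : ℂ) * omega 6 ^ 14 + (-1/3 : ℂ) * omega 6 ^ 18 + (1/3 : ℂ) * omega 6 ^ 20) * ((starRingEnd ℂ) (α 3) * α 5) + ((1/3 : ℂ)) * ((starRingEnd ℂ) (α 4) * α 0) + ((1/3 : ℂ) + (-1/3 : ℂ) * omega 6 ^ 2 + (1/3 : ℂ) * omega 6 ^ 4) * ((starRingEnd ℂ) (α 5) * α 1)) * hw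

  -- orthogonality determinant argument
  have det : ((starRingEnd ℂ) (α 2) * (starRingEnd ℂ) (α 3)
      - (starRingEnd ℂ) (α 0) * (starRingEnd ℂ) (α 5)) * α 1 = 0 := by
    linear_combination (starRingEnd ℂ) (α 2) * e2 - (starRingEnd ℂ) (α 0) * e5
  have det2 : ((starRingEnd ℂ) (α 2) * (starRingEnd ℂ) (α 3)
      - (starRingEnd ℂ) (α 0) * (starRingEnd ℂ) (α 5)) * α 4 = 0 := by
    linear_combination (starRingEnd ℂ) (α 3) * e5 - (starRingEnd ℂ) (α 5) * e2
  have hD : (starRingEnd ℂ) (α 2) * (starRingEnd ℂ) (α 3)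
      - (starRingEnd ℂ) (α 0) * (starRingEnd ℂ) (α 5) = 0 := by
    linear_combination 3 * (starRingEnd ℂ) (α 1) * det + 3 * (starRingEnd ℂ) (α 4) * det2
      - (3 * ((starRingEnd ℂ) (α 2) * (starRingEnd ℂ) (α 3)
        - (starRingEnd ℂ) (α 0) * (starRingEnd ℂ) (α 5))) * n2
  have hb0 : (starRingEnd ℂ) (α 0) = 0 := by
    linear_combination 3 * (starRingEnd ℂ) (α 2) * e6 - 3 * (starRingEnd ℂ) (α 0) * n3
      - 3 * α 5 * hD
  have ha0 : α 0 = 0 := by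
    have := congrArg (starRingEnd ℂ) hb0; simpa using this
  have n1' : (starRingEnd ℂ) (α 3) * α 3 = 1/3 := by
    linear_combination n1 - α 0 * hb0
  have ha3ne : α 3 ≠ 0 := by
    intro h; rw [h] at n1'; simp at n1'
  have hc1a3 : (starRingEnd ℂ) (α 1) * α 3 = 0 := by
    linear_combination e4 - (starRingEnd ℂ) (α 4) * ha0
  have hc1 : (starRingEnd ℂ) (α 1) = 0 := by
    rcases mul_eq_zero.mp hc1a3 with h | h
    · exact h
    · exact absurd h ha3ne
  have ha1 : α 1 = 0 := by
    have := congrArg (starRingEnd ℂ) hc1; simpa using this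
  have n2' : (starRingEnd ℂ) (α 4) * α 4 = 1/3 := by
    linear_combination n2 - (starRingEnd ℂ) (α 1) * ha1
  have ha4ne : α 4 ≠ 0 := by
    intro h; rw [h] at n2'; simp at n2'
  have hc2a4 : (starRingEnd ℂ) (α 2) * α 4 = 0 := by
    linear_combination e5 - (starRingEnd ℂ) (α 5) * ha1
  have hc2 : (starRingEnd ℂ) (α 2) = 0 := by
    rcases mul_eq_zero.mp hc2a4 with h | h
    · exact h
    · exact absurd h ha4ne
  have ha2 : α 2 = 0 := by
    have := congrArg (starRingEnd ℂ) hc2; simpa using this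
  have n3' : (starRingEnd ℂ) (α 5) * α 5 = 1/3 := by
    linear_combination n3 - (starRingEnd ℂ) (α 2) * ha2
  have hc5a3 : (starRingEnd ℂ) (α 5) * α 3 = 0 := by
    linear_combination e1 - (starRingEnd ℂ) (α 2) * ha0
  rcases mul_eq_zero.mp hc5a3 with h | h
  · rw [h] at n3'; simp at n3'
  · exact absurd h ha3ne
end

section
/- Let |α⟩ = Σ_{j=0}^{d-1} α_j|j⟩ be a unit vector in ℂ^d (d even) satisfying ⟨α| X^{d/2} Z^i |α⟩ = 0 for all i = 0, 1, ..., d/2. Then ᾱ_j α_{j+d/2 mod d} = 0 for every j; in particular at least d/2 of the coefficients α_j vanish. -/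
/-!
Put `β j = conj (α (j + d/2)) * α j`. The hypotheses say that the Fourier coefficients
`∑ j, β j * ω ^ (j * i)` vanish for `i ≤ d/2`. Since `β (j + d/2) = conj (β j)`, the conjugate of
the coefficient of index `i` is, up to a power of `ω`, the coefficient of index `d - i`; so all
`d` coefficients vanish, and `β = 0` because the Vandermonde matrix of the `d` distinct powers of
`ω` is invertible. Every pair `{j, j + d/2}` therefore contains a zero coefficient of `α`.
-/

open Matrix

open ComplexConjugate

lemma pow_mod_mul_of_pow_eq_one {M : Type*} [Monoid M] {ζ : M} {d : ℕ} (hζ : ζ ^ d = 1)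
    (a e : ℕ) : ζ ^ (a % d * e) = ζ ^ (a * e) := by
  conv_rhs => rw [← Nat.mod_add_div a d]
  rw [add_mul, pow_add, mul_assoc, pow_mul ζ d, hζ, one_pow, mul_one]

lemma conj_pow_mul_eq_pow_mul_sub {ζ : ℂ} {d : ℕ} (hζ : ζ ^ d = 1) (hd : d ≠ 0) {i : ℕ}
    (hi : i ≤ d) (n : ℕ) : conj (ζ ^ (n * i)) = ζ ^ (n * (d - i)) := by
  rw [map_pow, ← Complex.inv_eq_conj (Complex.norm_eq_one_of_pow_eq_one hζ hd), inv_pow]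
  refine inv_eq_of_mul_eq_one_left ?_
  rw [← pow_add, ← mul_add, Nat.sub_add_cancel hi, mul_comm, pow_mul, hζ, one_pow]

def shiftBy (d m : ℕ) (j : Fin d) : Fin d := ⟨((j : ℕ) + m) % d, Nat.mod_lt _ j.pos⟩

lemma shiftBy_shiftBy {d : ℕ} (a b : ℕ) (j : Fin d) :
    shiftBy d a (shiftBy d b j) = shiftBy d (b + a) j := by
  ext
  simp only [shiftBy, Nat.mod_add_mod, add_assoc]

lemma shiftBy_zero {d : ℕ} (j : Fin d) : shiftBy d 0 j = j := by
  ext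
  simp [shiftBy, Nat.mod_eq_of_lt j.isLt]

lemma shiftBy_self {d : ℕ} (j : Fin d) : shiftBy d d j = j := by
  ext
  simp [shiftBy, Nat.mod_eq_of_lt j.isLt]

lemma shiftBy_involutive {d m : ℕ} (hm : m + m = d) : Function.Involutive (shiftBy d m) := by
  intro j
  rw [shiftBy_shiftBy, hm, shiftBy_self]

lemma Xmat_apply (d : ℕ) (k j : Fin d) : Xmat d k j = if k = shiftBy d 1 j then 1 else 0 := by
  simp [Xmat, shiftBy, Fin.ext_iff]

lemma Xmat_pow_apply (d m : ℕ) (k j : Fin d) :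
    (Xmat d ^ m) k j = if k = shiftBy d m j then 1 else 0 := by
  induction m generalizing k with
  | zero => simp [Matrix.one_apply, shiftBy_zero, eq_comm]
  | succ m ih =>
    simp [pow_succ', Matrix.mul_apply, Xmat_apply, ih, shiftBy_shiftBy]

lemma Xmat_pow_mul_Zmat_pow_apply (d m i : ℕ) (k j : Fin d) :
    (Xmat d ^ m * Zmat d ^ i) k j = if k = shiftBy d m j then omega d ^ ((j : ℕ) * i) else 0 := by
  rw [Zmat, diagonal_pow, mul_diagonal, Xmat_pow_apply, Pi.pow_apply, ← pow_mul, ite_mul,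
    one_mul, zero_mul]

lemma star_dotProduct_Xmat_pow_mul_Zmat_pow_mulVec (d m i : ℕ) (α : Fin d → ℂ) :
    star α ⬝ᵥ (Xmat d ^ m * Zmat d ^ i) *ᵥ α
      = ∑ j, conj (α (shiftBy d m j)) * α j * omega d ^ ((j : ℕ) * i) := by
  simp only [dotProduct, mulVec, Xmat_pow_mul_Zmat_pow_apply, Finset.mul_sum, ite_mul, zero_mul,
    mul_ite, mul_zero, Pi.star_apply, Complex.star_def]
  rw [Finset.sum_comm]
  simp only [Finset.sum_ite_eq', Finset.mem_univ, if_true]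
  exact Finset.sum_congr rfl fun j _ => by ring

lemma pow_shiftBy_mul {M : Type*} [Monoid M] {ζ : M} {d : ℕ} (hζ : ζ ^ d = 1) (m e : ℕ)
    (j : Fin d) : ζ ^ ((shiftBy d m j : ℕ) * e) = ζ ^ (m * e) * ζ ^ ((j : ℕ) * e) := by
  rw [shiftBy, pow_mod_mul_of_pow_eq_one hζ, add_mul, pow_add, ← pow_mul_comm]

section HalfShiftSymmetric

variable {ζ : ℂ} {d m : ℕ} {β : Fin d → ℂ}

lemma conj_sum_mul_pow_of_conj_eq_shiftBy (hζ : ζ ^ d = 1) (hd : d ≠ 0) (hm : m + m = d)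
    (hβ : ∀ j, conj (β j) = β (shiftBy d m j)) {i : ℕ} (hi : i ≤ d) :
    conj (∑ j, β j * ζ ^ ((j : ℕ) * i))
      = ζ ^ (m * (d - i)) * ∑ j, β j * ζ ^ ((j : ℕ) * (d - i)) := by
  let σ := (shiftBy_involutive hm).toPerm
  calc conj (∑ j, β j * ζ ^ ((j : ℕ) * i))
      = ∑ j, β (σ j) * ζ ^ ((j : ℕ) * (d - i)) := by
        simp only [map_sum, map_mul, hβ, conj_pow_mul_eq_pow_mul_sub hζ hd hi]; rfl
    _ = ∑ j, β j * ζ ^ ((σ j : ℕ) * (d - i)) :=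
        (Equiv.sum_comp σ _).symm.trans (by simp [σ, shiftBy_involutive hm _])
    _ = ζ ^ (m * (d - i)) * ∑ j, β j * ζ ^ ((j : ℕ) * (d - i)) := by
        simp only [σ, Function.Involutive.coe_toPerm, pow_shiftBy_mul hζ, Finset.mul_sum]
        exact Finset.sum_congr rfl fun j _ => by ring

theorem eq_zero_of_sum_mul_pow_eq_zero_of_le_half (hζ : IsPrimitiveRoot ζ d) (hd : d ≠ 0)
    (hm : m + m = d) (hβ : ∀ j, conj (β j) = β (shiftBy d m j))
    (h : ∀ i ≤ m, ∑ j, β j * ζ ^ ((j : ℕ) * i) = 0) : β = 0 := by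
  refine eq_zero_of_forall_pow_sum_mul_pow_eq_zero (f := fun j : Fin d => ζ ^ (j : ℕ))
    (fun j k hjk => Fin.ext (hζ.pow_inj j.isLt k.isLt hjk)) fun i => ?_
  simp only [← pow_mul]
  rcases le_or_gt (i : ℕ) m with hi | hi
  · exact h i hi
  · have hconj :=
      conj_sum_mul_pow_of_conj_eq_shiftBy hζ.pow_eq_one hd hm hβ (i := d - i) (by omega)
    rw [h (d - i) (by omega), map_zero, Nat.sub_sub_self i.isLt.le] at hconj
    exact (mul_eq_zero.mp hconj.symm).resolve_left (pow_ne_zero _ (hζ.ne_zero hd))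

end HalfShiftSymmetric

lemma card_le_two_mul_card_filter_of_not_imp {ι : Type*} [Fintype ι] {σ : ι → ι}
    (hσ : σ.Injective) (p : ι → Prop) [DecidablePred p] (h : ∀ j, ¬ p j → p (σ j)) :
    Fintype.card ι ≤ 2 * (Finset.univ.filter p).card := by
  have hle : (Finset.univ.filter fun j => ¬ p j).card ≤ (Finset.univ.filter p).card :=
    Finset.card_le_card_of_injOn σ (fun j hj => by simp_all) hσ.injOn
  have htot := Finset.card_filter_add_card_filter_not (s := Finset.univ) p
  rw [Finset.card_univ] at htot
  omega

theorem half_coefficients_vanish_general (d : ℕ) (he : 2 ∣ d)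
    (α : Fin d → ℂ)
    (h : ∀ i : ℕ, i ≤ d / 2 →
      star α ⬝ᵥ (Xmat d ^ (d / 2) * Zmat d ^ i).mulVec α = 0) :
    (∀ j : Fin d,
      (starRingEnd ℂ) (α j) * α ⟨((j : ℕ) + d / 2) % d, Nat.mod_lt _ j.pos⟩ = 0) ∧
    d / 2 ≤ (Finset.univ.filter fun j : Fin d => α j = 0).card := by
  have hm : d / 2 + d / 2 = d := by omega
  have hσ := shiftBy_involutive hm
  have hpair (j : Fin d) : conj (α j) * α (shiftBy d (d / 2) j) = 0 := by
    have hd : d ≠ 0 := j.pos.ne'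
    have hβ := eq_zero_of_sum_mul_pow_eq_zero_of_le_half (ζ := omega d)
      (Complex.isPrimitiveRoot_exp d hd) hd hm
      (β := fun j => conj (α (shiftBy d (d / 2) j)) * α j)
      (fun j => by simp only [map_mul, Complex.conj_conj, hσ j, mul_comm])
      (fun i hi => by simpa [star_dotProduct_Xmat_pow_mul_Zmat_pow_mulVec] using h i hi)
    simpa [hσ j] using congrFun hβ (shiftBy d (d / 2) j)
  refine ⟨hpair, ?_⟩
  have := card_le_two_mul_card_filter_of_not_imp hσ.injective (fun j => α j = 0)
    fun j hj => (mul_eq_zero.mp (hpair j)).resolve_left (by simpa using hj)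
  simp only [Fintype.card_fin] at this
  omega

/-- If a unit vector `α` in `ℂ^d` (`d` even) satisfies `⟨α|X^{d/2}Z^i|α⟩ = 0`
for all `i = 0,…,d/2`, then `conj(α_j)·α_{j + d/2 mod d} = 0` for every `j`;
in particular at least `d/2` of the coefficients vanish. -/
theorem half_coefficients_vanish (d : ℕ) (hd0 : 0 < d) (he : 2 ∣ d)
    (α : Fin d → ℂ) (hunit : star α ⬝ᵥ α = 1)
    (h : ∀ i : ℕ, i ≤ d / 2 →
      star α ⬝ᵥ (Xmat d ^ (d / 2) * Zmat d ^ i).mulVec α = 0) :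
    (∀ j : Fin d,
      (starRingEnd ℂ) (α j) * α ⟨((j : ℕ) + d / 2) % d, Nat.mod_lt _ j.pos⟩ = 0) ∧
    d / 2 ≤ (Finset.univ.filter fun j : Fin d => α j = 0).card :=
  half_coefficients_vanish_general d he α h
end

section
/- Let d be even, 0 < i₀ < d-1, and suppose |α⟩ = Σ_{j=0}^{d-1} α_j|j⟩ is a unit vector in ℂ^d with ⟨α| X^{d/2} Z^i |α⟩ = 0 for i = 0,...,d/2 and ⟨α| Z^{i₀+2k} |α⟩ = 0 for k = 0,...,d/2 - 1. Then no such |α⟩ exists; i.e., these conditions are contradictory. -/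
/-! Write `d = m + m` and split `α = (u, w)` into its two halves. The conditions
`⟨α|X^m Z^i|α⟩ = 0` say that the discrete Fourier transform of `(g, ḡ)`, where `g r = w̄ r * u r`,
vanishes at the frequencies `i ≤ m`. This transform satisfies `S (d - i) = (-1)^i * conj (S i)`,
so it vanishes at every frequency, and invertibility of the Vandermonde matrix of `ω` gives
`g = 0`. Likewise the conditions `⟨α|Z^{i₀+2k}|α⟩ = 0` form a Fourier transform over the `m`-th
roots of unity `ω ^ 2`, which forces `|u r|² + (-1)^i₀ |w r|² = 0`. Together with
`w̄ r * u r = 0` this gives `u = w = 0`, contradicting `⟨α|α⟩ = 1`. -/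

open Matrix

open ComplexConjugate

theorem IsPrimitiveRoot.eq_zero_of_forall_sum_mul_pow_eq_zero {R : Type*} [CommRing R]
    [IsDomain R] {ζ : R} {n : ℕ} (hζ : IsPrimitiveRoot ζ n) {f : Fin n → R}
    (hf : ∀ k < n, ∑ j, f j * ζ ^ ((j : ℕ) * k) = 0) : f = 0 := by
  have hdet : (vandermonde fun j : Fin n => ζ ^ (j : ℕ)).det ≠ 0 :=
    det_vandermonde_ne_zero_iff.mpr fun i j hij => Fin.ext (hζ.pow_inj i.2 j.2 hij)
  refine eq_zero_of_vecMul_eq_zero hdet (funext fun k => ?_)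
  simpa [vecMul, dotProduct, vandermonde_apply, ← pow_mul] using hf k k.2

theorem pow_mul_tsub_eq_inv {G : Type*} [DivisionMonoid G] {ω : G} {n i : ℕ} (hω : ω ^ n = 1)
    (hi : i ≤ n) (r : ℕ) : ω ^ (r * (n - i)) = (ω ^ (r * i))⁻¹ :=
  eq_inv_of_mul_eq_one_left <| by
    rw [← pow_add, ← mul_add, Nat.sub_add_cancel hi, pow_mul', hω, one_pow]

theorem neg_one_pow_tsub_of_even {R : Type*} [Monoid R] [HasDistribNeg R] {n i : ℕ} (hn : Even n)
    (hi : i ≤ n) : (-1 : R) ^ (n - i) = (-1) ^ i := by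
  rcases Nat.even_or_odd i with h | h
  · rw [h.neg_one_pow, ((Nat.even_sub hi).mpr (iff_of_true hn h)).neg_one_pow]
  · have hodd : Odd (n - i) :=
      (Nat.odd_sub hi).mpr (iff_of_false (Nat.not_odd_iff_even.mpr hn) (Nat.not_even_iff_odd.mpr h))
    rw [h.neg_one_pow, hodd.neg_one_pow]

namespace IsPrimitiveRoot

variable {m : ℕ} {ω : ℂ}

theorem pow_half_eq_neg_one (hω : IsPrimitiveRoot ω (m + m)) (hm : m ≠ 0) : ω ^ m = -1 :=
  (hω.pow (by omega) (mul_two m).symm).eq_neg_one_of_two_right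

theorem pow_add_half_mul (hω : IsPrimitiveRoot ω (m + m)) (hm : m ≠ 0) (r i : ℕ) :
    ω ^ ((m + r) * i) = (-1) ^ i * ω ^ (r * i) := by
  rw [add_mul, pow_add, pow_mul, hω.pow_half_eq_neg_one hm]

theorem sum_append_star_mul_pow (hω : IsPrimitiveRoot ω (m + m)) (hm : m ≠ 0) (g : Fin m → ℂ)
    (i : ℕ) : ∑ b, Fin.append g (star g) b * ω ^ ((b : ℕ) * i)
      = ∑ r : Fin m, ω ^ ((r : ℕ) * i) * (g r + (-1) ^ i * conj (g r)) := by
  rw [Fin.sum_univ_add, ← Finset.sum_add_distrib]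
  refine Finset.sum_congr rfl fun r _ => ?_
  simp only [Fin.append_left, Fin.append_right, Fin.val_castAdd, Fin.val_natAdd,
    hω.pow_add_half_mul hm, Pi.star_apply, Complex.star_def]
  ring

theorem sum_mul_pow_tsub_eq_neg_one_pow_mul_conj (hω : IsPrimitiveRoot ω (m + m)) (hm : m ≠ 0)
    (g : Fin m → ℂ) {i : ℕ} (hi : i ≤ m + m) :
    ∑ r : Fin m, ω ^ ((r : ℕ) * (m + m - i)) * (g r + (-1) ^ (m + m - i) * conj (g r))
      = (-1) ^ i * conj (∑ r : Fin m, ω ^ ((r : ℕ) * i) * (g r + (-1) ^ i * conj (g r))) := by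
  have hconj (k : ℕ) : conj (ω ^ k) = (ω ^ k)⁻¹ := by
    rw [Complex.inv_eq_conj (by rw [norm_pow, hω.norm'_eq_one (by omega), one_pow])]
  have hsq : ((-1 : ℂ) ^ i) ^ 2 = 1 := by rw [← pow_mul, pow_mul', neg_one_sq, one_pow]
  rw [map_sum, Finset.mul_sum]
  refine Finset.sum_congr rfl fun r _ => ?_
  simp only [pow_mul_tsub_eq_inv hω.pow_eq_one hi, neg_one_pow_tsub_of_even ⟨m, rfl⟩ hi,
    map_mul, map_add, map_pow, map_neg, map_one, Complex.conj_conj, hconj]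
  linear_combination (-(ω ^ ((r : ℕ) * i))⁻¹ * g r) * hsq

theorem eq_zero_of_forall_le_half_sum_eq_zero (hω : IsPrimitiveRoot ω (m + m)) (hm : m ≠ 0)
    {g : Fin m → ℂ}
    (hg : ∀ i ≤ m, ∑ r : Fin m, ω ^ ((r : ℕ) * i) * (g r + (-1) ^ i * conj (g r)) = 0) :
    g = 0 := by
  have hall : ∀ i < m + m,
      ∑ r : Fin m, ω ^ ((r : ℕ) * i) * (g r + (-1) ^ i * conj (g r)) = 0 := by
    intro i hi
    rcases le_or_gt i m with him | him
    · exact hg i him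
    · have := hω.sum_mul_pow_tsub_eq_neg_one_pow_mul_conj hm g (i := m + m - i) (by omega)
      rwa [Nat.sub_sub_self hi.le, hg (m + m - i) (by omega), map_zero, mul_zero] at this
  have happend := hω.eq_zero_of_forall_sum_mul_pow_eq_zero fun i hi =>
    (hω.sum_append_star_mul_pow hm g i).trans (hall i hi)
  exact funext fun r => by simpa using congrFun happend (Fin.castAdd m r)

end IsPrimitiveRoot

theorem Xmat_mulVec_apply {d : ℕ} (v : Fin d → ℂ) (j : Fin d) :
    (Xmat d *ᵥ v) ⟨((j : ℕ) + 1) % d, Nat.mod_lt _ j.pos⟩ = v j := by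
  simp only [mulVec, dotProduct, Xmat, of_apply, ite_mul, one_mul, zero_mul]
  refine (Finset.sum_eq_single j (fun k _ hkj => if_neg fun h => hkj ?_) (by simp)).trans
    (if_pos rfl)
  exact Fin.ext (Nat.mod_eq_of_lt k.2 ▸ Nat.mod_eq_of_lt j.2 ▸
    Nat.ModEq.add_right_cancel' 1 h.symm)

theorem Xmat_pow_mulVec_apply {d : ℕ} (n : ℕ) (v : Fin d → ℂ) (j : Fin d) :
    (Xmat d ^ n *ᵥ v) ⟨((j : ℕ) + n) % d, Nat.mod_lt _ j.pos⟩ = v j := by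
  induction n with
  | zero => simp [Nat.mod_eq_of_lt j.2]
  | succ n ih =>
    have hidx : ((j : ℕ) + (n + 1)) % d = ((j + n) % d + 1) % d := by
      rw [Nat.mod_add_mod, add_assoc]
    rw [pow_succ', ← mulVec_mulVec]
    simp only [hidx]
    exact (Xmat_mulVec_apply _ ⟨_, _⟩).trans ih

theorem Zmat_pow_mulVec_apply {d : ℕ} (t : ℕ) (v : Fin d → ℂ) (j : Fin d) :
    (Zmat d ^ t *ᵥ v) j = omega d ^ ((j : ℕ) * t) * v j := by
  rw [Zmat, diagonal_pow, mulVec_diagonal, Pi.pow_apply, ← pow_mul]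

theorem isPrimitiveRoot_omega (d : ℕ) (hd : d ≠ 0) : IsPrimitiveRoot (omega d) d :=
  Complex.isPrimitiveRoot_exp d hd

section Halves

variable {m : ℕ}

theorem Xmat_pow_half_mulVec_castAdd (v : Fin (m + m) → ℂ) (r : Fin m) :
    (Xmat (m + m) ^ m *ᵥ v) (Fin.castAdd m r) = v (Fin.natAdd m r) := by
  convert Xmat_pow_mulVec_apply m v (Fin.natAdd m r) using 2
  ext
  simp only [Fin.val_castAdd, Fin.val_natAdd]
  rw [add_comm m, add_assoc, Nat.add_mod_right, Nat.mod_eq_of_lt (by omega)]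

theorem Xmat_pow_half_mulVec_natAdd (v : Fin (m + m) → ℂ) (r : Fin m) :
    (Xmat (m + m) ^ m *ᵥ v) (Fin.natAdd m r) = v (Fin.castAdd m r) := by
  convert Xmat_pow_mulVec_apply m v (Fin.castAdd m r) using 2
  ext
  simp only [Fin.val_castAdd, Fin.val_natAdd]
  rw [add_comm m, Nat.mod_eq_of_lt (by omega)]

theorem dotProduct_Xmat_pow_half_mul_Zmat_pow (hm : m ≠ 0) (α : Fin (m + m) → ℂ) (i : ℕ) :
    star α ⬝ᵥ (Xmat (m + m) ^ m * Zmat (m + m) ^ i) *ᵥ α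
      = ∑ r : Fin m, omega (m + m) ^ ((r : ℕ) * i) *
          (conj (α (Fin.natAdd m r)) * α (Fin.castAdd m r)
            + (-1) ^ i * conj (conj (α (Fin.natAdd m r)) * α (Fin.castAdd m r))) := by
  have hω := isPrimitiveRoot_omega (m + m) (by omega)
  rw [← mulVec_mulVec, dotProduct, Fin.sum_univ_add, ← Finset.sum_add_distrib]
  refine Finset.sum_congr rfl fun r _ => ?_
  simp only [Xmat_pow_half_mulVec_castAdd, Xmat_pow_half_mulVec_natAdd, Zmat_pow_mulVec_apply,
    Fin.val_castAdd, Fin.val_natAdd, hω.pow_add_half_mul hm, Pi.star_apply, Complex.star_def,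
    map_mul, Complex.conj_conj]
  ring

theorem dotProduct_Zmat_pow (hm : m ≠ 0) (α : Fin (m + m) → ℂ) (t : ℕ) :
    star α ⬝ᵥ Zmat (m + m) ^ t *ᵥ α
      = ∑ r : Fin m, omega (m + m) ^ ((r : ℕ) * t) *
          (conj (α (Fin.castAdd m r)) * α (Fin.castAdd m r)
            + (-1) ^ t * (conj (α (Fin.natAdd m r)) * α (Fin.natAdd m r))) := by
  have hω := isPrimitiveRoot_omega (m + m) (by omega)
  rw [dotProduct, Fin.sum_univ_add, ← Finset.sum_add_distrib]
  refine Finset.sum_congr rfl fun r _ => ?_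
  simp only [Zmat_pow_mulVec_apply, Fin.val_castAdd, Fin.val_natAdd, hω.pow_add_half_mul hm,
    Pi.star_apply, Complex.star_def]
  ring

end Halves

theorem IsPrimitiveRoot.add_neg_one_pow_mul_eq_zero {m : ℕ} {ω : ℂ}
    (hω : IsPrimitiveRoot ω (m + m)) (hm : m ≠ 0) {p q : Fin m → ℂ} (i₀ : ℕ)
    (h : ∀ k < m, ∑ r : Fin m, ω ^ ((r : ℕ) * (i₀ + 2 * k)) *
      (p r + (-1) ^ (i₀ + 2 * k) * q r) = 0) (r : Fin m) :
    p r + (-1) ^ i₀ * q r = 0 := by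
  have hζ : IsPrimitiveRoot (ω ^ 2) m := hω.pow (by omega) (two_mul m).symm
  have hf := hζ.eq_zero_of_forall_sum_mul_pow_eq_zero
    (f := fun r => ω ^ ((r : ℕ) * i₀) * (p r + (-1) ^ i₀ * q r)) fun k hk => by
      rw [← h k hk]
      refine Finset.sum_congr rfl fun r _ => ?_
      rw [pow_add (-1 : ℂ), pow_mul (-1 : ℂ), neg_one_sq, one_pow, mul_one, ← pow_mul,
        show (r : ℕ) * (i₀ + 2 * k) = r * i₀ + 2 * (r * k) by ring, pow_add]
      ring
  exact (mul_eq_zero.mp (congrFun hf r)).resolve_left (pow_ne_zero _ (hω.ne_zero (by omega)))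

theorem eq_zero_and_eq_zero_of_conj_mul_eq_zero {a b s : ℂ} (hs : s ≠ 0)
    (hab : conj b * a = 0) (hsum : conj a * a + s * (conj b * b) = 0) : a = 0 ∧ b = 0 := by
  rcases mul_eq_zero.mp hab with hb | ha
  · have hb : b = 0 := by simpa using hb
    subst hb
    simpa using hsum
  · subst ha
    simpa [hs] using hsum

theorem no_unit_vector_lemma7_general (d : ℕ) (he : 2 ∣ d) (i₀ : ℕ)
    (α : Fin d → ℂ) (hunit : star α ⬝ᵥ α = 1)
    (h1 : ∀ i : ℕ, i ≤ d / 2 →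
      star α ⬝ᵥ (Xmat d ^ (d / 2) * Zmat d ^ i).mulVec α = 0)
    (h2 : ∀ k : ℕ, k < d / 2 →
      star α ⬝ᵥ (Zmat d ^ (i₀ + 2 * k)).mulVec α = 0) :
    False := by
  obtain ⟨m, rfl⟩ : ∃ m, d = m + m := ⟨d / 2, by omega⟩
  have hm : m ≠ 0 := by
    rintro rfl
    simp at hunit
  have hω := isPrimitiveRoot_omega (m + m) (by omega)
  rw [show (m + m) / 2 = m by omega] at h1 h2
  have hcross := hω.eq_zero_of_forall_le_half_sum_eq_zero hm fun i hi =>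
    (dotProduct_Xmat_pow_half_mul_Zmat_pow hm α i).symm.trans (h1 i hi)
  have hpair := hω.add_neg_one_pow_mul_eq_zero hm i₀ fun k hk =>
    (dotProduct_Zmat_pow hm α _).symm.trans (h2 k hk)
  have hzero (r : Fin m) : α (Fin.castAdd m r) = 0 ∧ α (Fin.natAdd m r) = 0 :=
    eq_zero_and_eq_zero_of_conj_mul_eq_zero (pow_ne_zero _ (neg_ne_zero.mpr one_ne_zero))
      (congrFun hcross r) (hpair r)
  have hα : α = 0 := funext (Fin.addCases (fun r => (hzero r).1) (fun r => (hzero r).2))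
  simp [hα] at hunit

/-- For even `d` and `0 < i₀ < d-1`, there is no unit vector `α` in `ℂ^d` with
`⟨α|X^{d/2}Z^i|α⟩ = 0` for `i = 0,…,d/2` and `⟨α|Z^{i₀+2k}|α⟩ = 0` for
`k = 0,…,d/2-1`: these conditions are contradictory. -/
theorem no_unit_vector_lemma7 (d : ℕ) (he : 2 ∣ d) (i₀ : ℕ)
    (hi₀ : 0 < i₀) (hi₀' : i₀ < d - 1)
    (α : Fin d → ℂ) (hunit : star α ⬝ᵥ α = 1)
    (h1 : ∀ i : ℕ, i ≤ d / 2 →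
      star α ⬝ᵥ (Xmat d ^ (d / 2) * Zmat d ^ i).mulVec α = 0)
    (h2 : ∀ k : ℕ, k < d / 2 →
      star α ⬝ᵥ (Zmat d ^ (i₀ + 2 * k)).mulVec α = 0) :
    False :=
  no_unit_vector_lemma7_general d he i₀ α hunit h1 h2
end
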